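/- arXiv:2308.02975 — 6 statements merged into one kernel-verified Lean document; each statement's English description precedes it below -/
import Mathlib

section
/- Let G be a clique tree in which every block has at least 3 vertices, let v be a cut vertex of G contained in a pendant block isomorphic to K_m (m ≥ 3), and let G₁ = G − (K_m \ {v}) be the graph obtained by deleting the vertices of this pendant block other than v. Then Z(G₁ ⊕_v K_m) = Z(G₁) + Z(K_m) − 1, i.e., Z(G) = Z(G₁) + m − 2. -/
open Classical

/-- The set of vertices eventually forced blue, starting from the blue set `S`,
under the color-change rule: a blue vertex with exactly one non-blue neighbor
forces that neighbor. -/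
inductive SimpleGraph.Forced {V : Type*} (G : SimpleGraph V) (S : Set V) : V → Prop
  | init (v : V) (hv : v ∈ S) : SimpleGraph.Forced G S v
  | force (u w : V) (hu : SimpleGraph.Forced G S u) (hadj : G.Adj u w)
      (hothers : ∀ y, G.Adj u y → y ≠ w → SimpleGraph.Forced G S y) :
      SimpleGraph.Forced G S w

/-- `S` is a zero forcing set of `G` if starting from `S` blue, every vertex
eventually becomes blue. -/
def SimpleGraph.IsZeroForcingSet {V : Type*} (G : SimpleGraph V) (S : Set V) : Prop :=
  ∀ v, G.Forced S v

/-- The zero forcing number `Z(G)`: the least size of a zero forcing set. -/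
noncomputable def SimpleGraph.zeroForcingNumber {V : Type*} (G : SimpleGraph V) : ℕ :=
  sInf {n | ∃ S : Set V, S.ncard = n ∧ G.IsZeroForcingSet S}

/-- The induced subgraph of `G` on `B` is connected and has no cut vertex. -/
def SimpleGraph.IsConnectedNoCutVertexSet {V : Type*} (G : SimpleGraph V) (B : Set V) : Prop :=
  (G.induce B).Connected ∧ ∀ v ∈ B, B \ {v} = ∅ ∨ (G.induce (B \ {v})).Connected

/-- `B` is (the vertex set of) a block of `G`: a maximal connected subgraph
without cut vertices. -/
def SimpleGraph.IsBlock {V : Type*} (G : SimpleGraph V) (B : Set V) : Prop :=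
  G.IsConnectedNoCutVertexSet B ∧
    ∀ C, B ⊆ C → G.IsConnectedNoCutVertexSet C → B = C

/-- `v` is a cut vertex of `G`: `G` is connected but `G - v` is not. -/
def SimpleGraph.IsCutVertex {V : Type*} (G : SimpleGraph V) (v : V) : Prop :=
  G.Connected ∧ ¬ (G.induce ({v}ᶜ : Set V)).Connected

/-- A clique tree: a connected graph each of whose blocks is a clique. -/
def SimpleGraph.IsCliqueTree {V : Type*} (G : SimpleGraph V) : Prop :=
  G.Connected ∧ ∀ B : Set V, G.IsBlock B → G.IsClique B

/-- The real adjacency matrix of a graph. -/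
noncomputable def SimpleGraph.adjMatR {V : Type*} [Fintype V] (G : SimpleGraph V) :
    Matrix V V ℝ :=
  Matrix.of fun i j => if G.Adj i j then (1 : ℝ) else 0

/-- The spectral radius of a (connected) graph: the largest real eigenvalue of
its adjacency matrix. -/
noncomputable def SimpleGraph.specRad {V : Type*} [Fintype V] (G : SimpleGraph V) : ℝ :=
  sSup {t : ℝ | ∃ x : V → ℝ, x ≠ 0 ∧ G.adjMatR.mulVec x = t • x}

/-- The clique tree `𝒢(n,k)` on vertex set `Fin n`: one block `K_{2k-n+2}`
(on the vertices `0, 1, …, 2k-n+1`) and `n-k-1` triangle blocks (on the vertex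
`0` together with the pairs `{2k-n+2i, 2k-n+1+2i}` for `1 ≤ i ≤ n-k-1`), all
sharing the single central cut vertex `0`. -/
def calG (n k : ℕ) : SimpleGraph (Fin n) :=
  SimpleGraph.fromRel (fun i j =>
    (i.val = 0 ∨ j.val = 0) ∨
    (i.val ≤ 2 * k - n + 1 ∧ j.val ≤ 2 * k - n + 1) ∨
    (2 * k - n + 1 < i.val ∧ 2 * k - n + 1 < j.val ∧
      (i.val - (2 * k - n + 2)) / 2 = (j.val - (2 * k - n + 2)) / 2))

/-! The vertices of `B \ {v}` are pairwise adjacent twins all of whose neighbours lie in the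
clique `B`. Hence a zero forcing set of `G` misses at most one of them, and its restriction to
`G₁ = G - (B \ {v})`, with `v` added when it contains all of `B \ {v}`, is a zero forcing set of
`G₁`: a force from `B \ {v}` into `G₁` can only hit `v`, and needs the rest of `B` blue.
Conversely a zero forcing set of `G₁` together with all but one vertex `w` of `B \ {v}` forces
`G`: once `v` is blue, a third vertex of `B` forces `w`. -/

namespace SimpleGraph

variable {V : Type*} {G : SimpleGraph V}

theorem IsClique.induce_connected {s : Set V} (h : G.IsClique s) (hs : s.Nonempty) :
    (G.induce s).Connected := by
  have : Nonempty s := hs.to_subtype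
  exact induce_eq_top.mpr h ▸ connected_top

theorem Walk.IsPath.exists_walk_to_end_avoiding [DecidableEq V] {a b : V} {p : G.Walk a b}
    (hp : p.IsPath) {y z : V} (hz : z ∈ p.support) (hyz : y ≠ z) :
    ∃ e ∈ ({a, b} : Set V), ∃ q : G.Walk z e, y ∉ q.support ∧ q.support ⊆ p.support := by
  by_cases hy : y ∈ (p.dropUntil z hz).support
  · refine ⟨a, Or.inl rfl, (p.takeUntil z hz).reverse, ?_, ?_⟩
    · have hnodup := hp.support_nodup
      rw [← p.take_spec hz, Walk.support_append] at hnodup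
      have hy' : y ∈ (p.dropUntil z hz).support.tail := by
        rw [← (p.dropUntil z hz).cons_tail_support] at hy
        exact (List.mem_cons.mp hy).resolve_left hyz
      rw [Walk.support_reverse, List.mem_reverse]
      exact fun hy'' => List.disjoint_of_nodup_append hnodup hy'' hy'
    · rw [Walk.support_reverse]
      exact fun x hx => p.support_takeUntil_subset_support hz (List.mem_reverse.mp hx)
  · exact ⟨b, Or.inr rfl, p.dropUntil z hz, hy, p.support_dropUntil_subset_support hz⟩

theorem IsClique.isConnectedNoCutVertexSet_union_support {B : Set V} (hB : G.IsClique B)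
    {a b : V} {p : G.Walk a b} (hp : p.IsPath) (ha : a ∈ B) (hb : b ∈ B) (hab : a ≠ b) :
    G.IsConnectedNoCutVertexSet (B ∪ {x | x ∈ p.support}) := by
  classical
  refine ⟨induce_union_connected (hB.induce_connected ⟨a, ha⟩).preconnected
    p.connected_induce_support.preconnected ⟨a, ha, p.start_mem_support⟩, fun y _ => Or.inr ?_⟩
  have hBy : G.IsClique (B \ {y}) := hB.subset Set.sdiff_subset
  obtain ⟨c, hc⟩ : (B \ {y}).Nonempty := by
    by_cases hya : y = a
    · exact ⟨b, hb, fun h => hab (hya ▸ h).symm⟩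
    · exact ⟨a, ha, fun h => hya h.symm⟩
  refine induce_connected_of_patches c ⟨Or.inl hc.1, hc.2⟩ fun {z} ⟨hz, hzy⟩ => ?_
  rcases hz with hzB | hzp
  · exact ⟨B \ {y}, Set.sdiff_subset_sdiff_left Set.subset_union_left, hc, ⟨hzB, hzy⟩,
      (hBy.induce_connected ⟨c, hc⟩).preconnected _ _⟩
  · obtain ⟨e, he, q, hyq, hqp⟩ := hp.exists_walk_to_end_avoiding hzp (Ne.symm hzy)
    have heB : e ∈ B \ {y} := by
      refine ⟨?_, fun h => hyq (h ▸ q.end_mem_support)⟩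
      rcases he with rfl | rfl <;> assumption
    refine ⟨B \ {y} ∪ {x | x ∈ q.support}, ?_, Or.inl hc, Or.inr q.start_mem_support,
      (induce_union_connected (hBy.induce_connected ⟨c, hc⟩).preconnected
        q.connected_induce_support.preconnected ⟨e, heB, q.end_mem_support⟩).preconnected _ _⟩
    rintro x (⟨hxB, hxy⟩ | hxq)
    · exact ⟨Or.inl hxB, hxy⟩
    · exact ⟨Or.inr (hqp hxq), fun h => hyq (h ▸ hxq)⟩

/-- A neighbour of `u` outside `B`, joined back to `B` by a path avoiding `u`, would enlarge
the block. -/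
theorem IsBlock.neighborSet_subset_of_not_isCutVertex (hG : G.Connected) {B : Set V}
    (hB : G.IsBlock B) (hBc : G.IsClique B) {u w : V} (hu : u ∈ B) (hw : w ∈ B) (huw : u ≠ w)
    (hcut : ¬ G.IsCutVertex u) : G.neighborSet u ⊆ B := by
  intro x (hux : G.Adj u x)
  by_contra hxB
  have hconn : (G.induce ({u}ᶜ : Set V)).Connected := by_contra fun h => hcut ⟨hG, h⟩
  obtain ⟨q₀⟩ := hconn.preconnected ⟨x, (G.ne_of_adj hux).symm⟩ ⟨w, Ne.symm huw⟩
  obtain ⟨q, hq, huq⟩ : ∃ q : G.Walk x w, q.IsPath ∧ u ∉ q.support := by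
    refine ⟨q₀.bypass.map (Embedding.induce _).toHom,
      q₀.bypass_isPath.map Subtype.val_injective, ?_⟩
    intro h
    obtain ⟨y, -, hyu⟩ := List.mem_map.mp (Walk.support_map _ _ ▸ h)
    exact y.2 hyu
  have hp : (Walk.cons hux q).IsPath := (Walk.cons_isPath_iff _ _).mpr ⟨hq, huq⟩
  have hBC :=
    hB.2 _ Set.subset_union_left (hBc.isConnectedNoCutVertexSet_union_support hp hu hw huw)
  exact hxB (hBC ▸ Or.inr (List.mem_cons_of_mem _ q.start_mem_support))

structure IsPendantClique (G : SimpleGraph V) (B : Set V) (v : V) : Prop where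
  isClique : G.IsClique B
  mem : v ∈ B
  neighborSet_subset : ∀ a ∈ B \ {v}, G.neighborSet a ⊆ B

theorem IsBlock.isPendantClique (hG : G.Connected) {B : Set V} (hB : G.IsBlock B)
    (hBc : G.IsClique B) {v : V} (hv : v ∈ B) (hpendant : ∀ u ∈ B, G.IsCutVertex u → u = v) :
    G.IsPendantClique B v :=
  ⟨hBc, hv, fun a ha => hB.neighborSet_subset_of_not_isCutVertex hG hBc ha.1 hv ha.2
    fun h => ha.2 (hpendant a ha.1 h)⟩

theorem zeroForcingNumber_le_ncard {S : Set V} (hS : G.IsZeroForcingSet S) :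
    G.zeroForcingNumber ≤ S.ncard :=
  Nat.sInf_le ⟨S, rfl, hS⟩

theorem exists_isZeroForcingSet_ncard_eq (G : SimpleGraph V) :
    ∃ S : Set V, G.IsZeroForcingSet S ∧ S.ncard = G.zeroForcingNumber := by
  obtain ⟨S, hcard, hS⟩ :=
    Nat.sInf_mem (s := {n | ∃ S : Set V, S.ncard = n ∧ G.IsZeroForcingSet S})
      ⟨_, Set.univ, rfl, fun x => .init x trivial⟩
  exact ⟨S, hS, hcard⟩

/-- Whoever forces the first of two white twins is adjacent to the other, which is still
white. -/
theorem IsZeroForcingSet.mem_or_mem_of_twins {S : Set V} (hS : G.IsZeroForcingSet S) {a b : V}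
    (hab : a ≠ b) (htwin : ∀ u, u ≠ a → u ≠ b → (G.Adj u a ↔ G.Adj u b)) : a ∈ S ∨ b ∈ S := by
  by_contra! hnot
  suffices ∀ x, G.Forced S x → x ≠ a ∧ x ≠ b from (this a (hS a)).1 rfl
  intro x hx
  induction hx with
  | init x hx => exact ⟨fun h => hnot.1 (h ▸ hx), fun h => hnot.2 (h ▸ hx)⟩
  | force u w _ hadj _ ihu ihothers =>
    constructor
    · rintro rfl
      by_cases hub : u = b
      · exact ihu.2 hub
      · exact (ihothers b ((htwin u (G.ne_of_adj hadj) hub).mp hadj) hab.symm).2 rfl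
    · rintro rfl
      by_cases hua : u = a
      · exact ihu.1 hua
      · exact (ihothers a ((htwin u hua (G.ne_of_adj hadj)).mpr hadj) hab).1 rfl

namespace IsPendantClique

variable {B : Set V} {v : V}

theorem eq_of_adj (hP : G.IsPendantClique B v) {a x : V} (ha : a ∈ B \ {v}) (hx : x ∉ B \ {v})
    (hax : G.Adj a x) : x = v :=
  by_contra fun h => hx ⟨hP.neighborSet_subset a ha hax, h⟩

theorem adj_of_adj (hP : G.IsPendantClique B v) {a b u : V} (ha : a ∈ B \ {v}) (hb : b ∈ B)
    (hua : G.Adj u a) (hub : u ≠ b) : G.Adj u b :=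
  hP.isClique (hP.neighborSet_subset a ha hua.symm) hb hub

theorem subsingleton_diff (hP : G.IsPendantClique B v) {S : Set V} (hS : G.IsZeroForcingSet S) :
    ((B \ {v}) \ S).Subsingleton := by
  intro a ha b hb
  by_contra hab
  have htwin : ∀ u, u ≠ a → u ≠ b → (G.Adj u a ↔ G.Adj u b) := fun u hua hub =>
    ⟨fun h => hP.adj_of_adj ha.1 hb.1.1 h hub, fun h => hP.adj_of_adj hb.1 ha.1.1 h hua⟩
  exact (hS.mem_or_mem_of_twins hab htwin).elim ha.2 hb.2

theorem isZeroForcingSet_image_union (hP : G.IsPendantClique B v)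
    {S₁ : Set ((B \ {v})ᶜ : Set V)} (hS₁ : (G.induce (B \ {v})ᶜ).IsZeroForcingSet S₁)
    {w₀ u₀ : V} (hw₀ : w₀ ∈ B \ {v}) (hu₀ : u₀ ∈ B \ {v}) (hne : u₀ ≠ w₀) :
    G.IsZeroForcingSet (Subtype.val '' S₁ ∪ ((B \ {v}) \ {w₀})) := by
  set S := Subtype.val '' S₁ ∪ ((B \ {v}) \ {w₀})
  have hinit : ∀ a ∈ B \ {v}, a ≠ w₀ → G.Forced S a := fun a ha h => .init a (Or.inr ⟨ha, h⟩)
  have hA : G.Forced S v → ∀ a ∈ B \ {v}, G.Forced S a := by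
    intro hv a ha
    by_cases haw : a = w₀
    · refine haw ▸ .force u₀ w₀ (hinit u₀ hu₀ hne) (hP.isClique hu₀.1 hw₀.1 hne) fun y hy hyw => ?_
      by_cases hyv : y = v
      · exact hyv ▸ hv
      · exact hinit y ⟨hP.neighborSet_subset u₀ hu₀ hy, hyv⟩ hyw
    · exact hinit a ha haw
  have hW : ∀ y, (G.induce (B \ {v})ᶜ).Forced S₁ y → G.Forced S y := by
    intro y hy
    induction hy with
    | init y hy => exact .init _ (Or.inl ⟨y, hy, rfl⟩)
    | force u w _ hadj _ ihu ihothers =>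
      refine .force (u : V) w ihu hadj fun y hy hyw => ?_
      by_cases hyA : y ∈ B \ {v}
      · exact hA (hP.eq_of_adj hyA u.2 hy.symm ▸ ihu) y hyA
      · exact ihothers ⟨y, hyA⟩ hy fun h => hyw (congrArg Subtype.val h)
  intro x
  by_cases hx : x ∈ B \ {v}
  · exact hA (hW _ (hS₁ ⟨v, fun h => h.2 rfl⟩)) x hx
  · exact hW _ (hS₁ ⟨x, hx⟩)

theorem isZeroForcingSet_induce (hP : G.IsPendantClique B v) {S : Set V}
    (hS : G.IsZeroForcingSet S) {T : Set ((B \ {v})ᶜ : Set V)} (hST : Subtype.val ⁻¹' S ⊆ T)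
    (hvT : B \ {v} ⊆ S → ⟨v, fun h => h.2 rfl⟩ ∈ T) :
    (G.induce (B \ {v})ᶜ).IsZeroForcingSet T := by
  set H := G.induce (B \ {v})ᶜ
  have hvW : v ∈ (B \ {v})ᶜ := fun h => h.2 rfl
  have hforced : ∀ x, G.Forced S x → (∀ hx : x ∈ (B \ {v})ᶜ, H.Forced T ⟨x, hx⟩) ∧
      (x ∈ B \ {v} → x ∉ S → H.Forced T ⟨v, hvW⟩) := by
    intro x hx
    induction hx with
    | init x hx => exact ⟨fun h => .init _ (hST hx), fun _ h => absurd hx h⟩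
    | force u w _ hadj _ ihu ihothers =>
      refine ⟨fun hw => ?_, fun hw _ => ?_⟩
      · by_cases hu : u ∈ B \ {v}
        · have hvw : v = w := (hP.eq_of_adj hu hw hadj).symm
          subst hvw
          by_cases huS : u ∈ S
          · by_cases hAS : B \ {v} ⊆ S
            · exact .init _ (hvT hAS)
            · obtain ⟨a, ha, haS⟩ := Set.not_subset.mp hAS
              have hua : G.Adj u a := hP.isClique hu.1 ha.1 fun h => haS (h ▸ huS)
              exact (ihothers a hua ha.2).2 ha haS
          · exact ihu.2 hu huS
        · exact .force (G := H) ⟨u, hu⟩ ⟨w, hw⟩ (ihu.1 hu) hadj fun y hy hyw =>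
            (ihothers y hy fun h => hyw (Subtype.ext h)).1 y.2
      · have huB : u ∈ B := hP.neighborSet_subset w hw hadj.symm
        by_cases huv : u = v
        · exact huv ▸ ihu.1 (huv ▸ hvW)
        · exact (ihothers v (hP.isClique huB hP.mem huv) fun h => hw.2 h.symm).1 hvW
  exact fun y => (hforced y (hS y)).1 y.2

theorem zeroForcingNumber_le [Finite V] (hP : G.IsPendantClique B v) (hB : 3 ≤ B.ncard) :
    G.zeroForcingNumber ≤ (G.induce (B \ {v})ᶜ).zeroForcingNumber + (B.ncard - 2) := by
  obtain ⟨S₁, hS₁, hcard⟩ := exists_isZeroForcingSet_ncard_eq (G.induce (B \ {v})ᶜ)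
  have hA : (B \ {v}).ncard = B.ncard - 1 := Set.ncard_sdiff_singleton_of_mem hP.mem
  obtain ⟨w₀, u₀, hw₀, hu₀, hne⟩ :=
    (Set.one_lt_ncard_iff (Set.toFinite _)).mp (by omega : 1 < (B \ {v}).ncard)
  calc G.zeroForcingNumber
      ≤ (Subtype.val '' S₁ ∪ ((B \ {v}) \ {w₀})).ncard :=
        zeroForcingNumber_le_ncard (hP.isZeroForcingSet_image_union hS₁ hw₀ hu₀ hne.symm)
    _ ≤ (Subtype.val '' S₁).ncard + ((B \ {v}) \ {w₀}).ncard := Set.ncard_union_le _ _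
    _ = (G.induce (B \ {v})ᶜ).zeroForcingNumber + (B.ncard - 2) := by
        rw [Set.ncard_image_of_injective _ Subtype.val_injective,
          Set.ncard_sdiff_singleton_of_mem hw₀, hA, hcard]
        omega

theorem le_zeroForcingNumber [Finite V] (hP : G.IsPendantClique B v) (hB : 2 ≤ B.ncard) :
    (G.induce (B \ {v})ᶜ).zeroForcingNumber + (B.ncard - 2) ≤ G.zeroForcingNumber := by
  obtain ⟨S, hS, hcard⟩ := exists_isZeroForcingSet_ncard_eq G
  have hA : (B \ {v}).ncard = B.ncard - 1 := Set.ncard_sdiff_singleton_of_mem hP.mem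
  have hsplit (X : Set V) :
      (X ∩ (B \ {v})).ncard + (Subtype.val ⁻¹' X : Set ((B \ {v})ᶜ : Set V)).ncard = X.ncard := by
    rw [← Set.ncard_image_of_injective _ Subtype.val_injective, Subtype.image_preimage_coe,
      Set.inter_comm _ X, ← Set.sdiff_eq, Set.ncard_inter_add_ncard_sdiff_eq_ncard]
  by_cases hAS : B \ {v} ⊆ S
  · have hT := hP.isZeroForcingSet_induce hS (T := Subtype.val ⁻¹' insert v S)
      (Set.preimage_mono (Set.subset_insert v S)) fun _ => Set.mem_insert v S
    have h1 := hsplit (insert v S)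
    rw [Set.insert_inter_of_notMem fun h => h.2 rfl, Set.inter_eq_right.mpr hAS] at h1
    have h2 := Set.ncard_insert_le v S
    have h3 := zeroForcingNumber_le_ncard hT
    omega
  · have hT := hP.isZeroForcingSet_induce hS (T := Subtype.val ⁻¹' S) subset_rfl
      fun h => absurd h hAS
    have h1 := hsplit S
    have h2 := Set.ncard_inter_add_ncard_sdiff_eq_ncard (B \ {v}) S
    have h3 := Set.ncard_le_one_iff_subsingleton.mpr (hP.subsingleton_diff hS)
    have h4 := zeroForcingNumber_le_ncard hT
    rw [Set.inter_comm] at h2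
    omega

theorem zeroForcingNumber_eq [Finite V] (hP : G.IsPendantClique B v) (hB : 3 ≤ B.ncard) :
    G.zeroForcingNumber = (G.induce (B \ {v})ᶜ).zeroForcingNumber + B.ncard - 2 := by
  have := hP.zeroForcingNumber_le hB
  have := hP.le_zeroForcingNumber (by omega)
  omega

end IsPendantClique

end SimpleGraph

theorem zeroForcing_pendant_block_general {V : Type*} [Fintype V] (G : SimpleGraph V)
    (hG : G.IsCliqueTree)
    (m : ℕ) (hm : 3 ≤ m)
    (B : Set V) (hB : G.IsBlock B) (hBcard : B.ncard = m)
    (v : V) (hv : v ∈ B)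
    (hpendant : ∀ u ∈ B, G.IsCutVertex u → u = v) :
    G.zeroForcingNumber = (G.induce ((B \ {v})ᶜ)).zeroForcingNumber + m - 2 := by
  subst hBcard
  exact (hB.isPendantClique hG.1 (hG.2 B hB) hv hpendant).zeroForcingNumber_eq hm

/-- Let `G` be a clique tree in which every block has at least 3
vertices, `v` a cut vertex contained in a pendant block `B ≅ K_m` (`m ≥ 3`), and
`G₁ = G - (K_m \ {v})`.  Then `Z(G₁ ⊕_v K_m) = Z(G₁) + Z(K_m) - 1`, i.e.
`Z(G) = Z(G₁) + m - 2`. -/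
theorem zeroForcing_pendant_block {V : Type*} [Fintype V] (G : SimpleGraph V)
    (hG : G.IsCliqueTree)
    (hblocks : ∀ B : Set V, G.IsBlock B → 3 ≤ B.ncard)
    (m : ℕ) (hm : 3 ≤ m)
    (B : Set V) (hB : G.IsBlock B) (hBcard : B.ncard = m)
    (v : V) (hv : v ∈ B) (hcut : G.IsCutVertex v)
    (hpendant : ∀ u ∈ B, G.IsCutVertex u → u = v) :
    G.zeroForcingNumber = (G.induce ((B \ {v})ᶜ)).zeroForcingNumber + m - 2 :=
  zeroForcing_pendant_block_general G hG m hm B hB hBcard v hv hpendant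
end

section
/- Let G be a clique tree with b blocks B₁, B₂, …, B_b, where each block has at least 3 vertices. Then the zero forcing number of G satisfies Z(G) = Σ_{i=1}^{b} Z(B_i) − Σ_{v ∈ V(G)} (bi_G(v) − 1), where bi_G(v) denotes the number of blocks of G containing v. -/
/-!
Root the clique tree at a vertex `r`. In each block `B` the vertex `c` nearest to `r` is unique
and all other vertices of `B` lie one step further from `r`. A vertex shared by two blocks is the
nearest vertex of one of them: otherwise shortest paths back to `r` close a cycle through both
blocks, and a cycle lies inside a single block.

Colour white one vertex `w ≠ c` of every block and everything else blue. Once `c` is blue, a third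
vertex of `B` forces `w`, unless it has a second white neighbour, which makes it the nearest vertex
of a deeper block whose white vertex is still white; descending induction on depth rules this out,
and ascending induction makes every nearest vertex blue. Conversely every force turns blue the last
white vertex of some block, so a zero forcing set misses at most `b` vertices. Hence
`Z(G) = |V| - b`, and the formula follows from `Z(K_m) = m - 1` by double counting incidences.
-/

open Classical

namespace SimpleGraph

variable {V : Type*} {G : SimpleGraph V}

lemma Walk.IsPath.connected_induce_support_sdiff_start {u v : V} {p : G.Walk u v}
    (hp : p.IsPath) (huv : u ≠ v) :
    (G.induce ({z | z ∈ p.support} \ {u})).Connected := by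
  cases p with
  | nil => exact absurd rfl huv
  | cons h q =>
    have hu : u ∉ q.support := (Walk.cons_isPath_iff h q).mp hp |>.2
    have hset : {z | z ∈ (Walk.cons h q).support} \ {u} = {z | z ∈ q.support} := by
      ext z
      simp only [Walk.support_cons, Set.mem_sdiff, Set.mem_ofPred_eq, List.mem_cons,
        Set.mem_singleton_iff]
      exact ⟨fun ⟨hz, hzu⟩ => hz.resolve_left hzu, fun hz => ⟨.inr hz, fun h => hu (h ▸ hz)⟩⟩
    rw [hset]
    exact q.connected_induce_support

lemma isConnectedNoCutVertexSet_singleton (v : V) : G.IsConnectedNoCutVertexSet {v} :=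
  ⟨by simp, fun _ hx => .inl (by simp_all)⟩

lemma isConnectedNoCutVertexSet_pair {u v : V} (h : G.Adj u v) :
    G.IsConnectedNoCutVertexSet {u, v} := by
  refine ⟨induce_pair_connected_of_adj h, fun x hx => .inr ?_⟩
  rcases hx with rfl | rfl
  · rw [Set.insert_sdiff_self_of_notMem (by simpa using h.ne)]
    simp
  · rw [Set.pair_comm, Set.insert_sdiff_self_of_notMem (by simpa using h.ne.symm)]
    simp

lemma Walk.IsCycle.isConnectedNoCutVertexSet {u : V} {c : G.Walk u u} (hc : c.IsCycle) :
    G.IsConnectedNoCutVertexSet {z | z ∈ c.support} := by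
  refine ⟨c.connected_induce_support, fun v hv => .inr ?_⟩
  -- Rotate the cycle to start at `v`; dropping its first edge leaves a path ending at `v`.
  set c' := c.rotate v hv
  have hc' : c'.IsCycle := hc.rotate hv
  have hsupp : ∀ z, z ∈ c.support ↔ z ∈ c'.tail.reverse.support := by
    intro z
    rw [Walk.support_reverse, List.mem_reverse, ← Walk.mem_support_rotate_iff c v hv,
      ← Walk.cons_support_tail hc'.not_nil, List.mem_cons]
    exact ⟨fun h => h.elim (· ▸ c'.tail.end_mem_support) id, .inr⟩
  rw [show {z | z ∈ c.support} = {z | z ∈ c'.tail.reverse.support} from Set.ext hsupp]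
  exact hc'.isPath_tail.reverse.connected_induce_support_sdiff_start
    (c'.adj_snd hc'.not_nil).ne

lemma IsConnectedNoCutVertexSet.connected_induce_sdiff_singleton {A : Set V}
    (hA : G.IsConnectedNoCutVertexSet A) {x y : V} (hx : x ∈ A) (hy : y ∈ A) (hxy : x ≠ y)
    (v : V) : (G.induce (A \ {v})).Connected := by
  by_cases hv : v ∈ A
  · refine (hA.2 v hv).resolve_left fun h => hxy ?_
    have hA' : A ⊆ {v} := Set.sdiff_eq_empty.mp h
    rw [hA' hx, hA' hy]
  · rw [Set.sdiff_singleton_eq_self hv]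
    exact hA.1

lemma IsConnectedNoCutVertexSet.union {A C : Set V} (hA : G.IsConnectedNoCutVertexSet A)
    (hC : G.IsConnectedNoCutVertexSet C) {x y : V} (hx : x ∈ A ∩ C) (hy : y ∈ A ∩ C)
    (hxy : x ≠ y) : G.IsConnectedNoCutVertexSet (A ∪ C) := by
  refine ⟨induce_union_connected hA.1.preconnected hC.1.preconnected ⟨x, hx⟩,
    fun v _ => .inr ?_⟩
  rw [Set.union_sdiff_distrib]
  refine induce_union_connected
    (hA.connected_induce_sdiff_singleton hx.1 hy.1 hxy v).preconnected
    (hC.connected_induce_sdiff_singleton hx.2 hy.2 hxy v).preconnected ?_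
  by_cases hxv : x = v
  · exact ⟨y, ⟨hy.1, fun h => hxy (hxv.trans h.symm)⟩, ⟨hy.2, fun h => hxy (hxv.trans h.symm)⟩⟩
  · exact ⟨x, ⟨hx.1, hxv⟩, ⟨hx.2, hxv⟩⟩

lemma IsConnectedNoCutVertexSet.exists_isBlock_superset [Finite V] {A : Set V}
    (hA : G.IsConnectedNoCutVertexSet A) : ∃ D, G.IsBlock D ∧ A ⊆ D := by
  obtain ⟨D, hAD, hD⟩ := Set.Finite.exists_le_maximal (s := {C | G.IsConnectedNoCutVertexSet C})
    (Set.toFinite _) hA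
  exact ⟨D, ⟨hD.prop, fun C hDC hC => le_antisymm hDC (hD.le_of_ge hC hDC)⟩, hAD⟩

lemma IsBlock.eq_of_mem_inter {A C : Set V} (hA : G.IsBlock A) (hC : G.IsBlock C) {x y : V}
    (hx : x ∈ A ∩ C) (hy : y ∈ A ∩ C) (hxy : x ≠ y) : A = C := by
  have hAC := hA.1.union hC.1 hx hy hxy
  exact (hA.2 _ Set.subset_union_left hAC).trans (hC.2 _ Set.subset_union_right hAC).symm

lemma exists_isBlock_of_adj_of_walk [Finite V] {x y z : V} (hy : G.Adj x y) (hz : G.Adj x z)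
    (hyz : y ≠ z) (p : G.Walk z y) (hx : x ∉ p.support) :
    ∃ D, G.IsBlock D ∧ x ∈ D ∧ y ∈ D ∧ z ∈ D := by
  have hx' : x ∉ p.bypass.support := fun h => hx (p.support_bypass_subset_support h)
  have hcycle : (Walk.cons hy.symm (Walk.cons hz p.bypass)).IsCycle := by
    rw [Walk.cons_isCycle_iff, Walk.cons_isPath_iff, Walk.edges_cons, List.mem_cons]
    refine ⟨⟨p.bypass_isPath, hx'⟩, ?_⟩
    rintro (h | h)
    · rcases Sym2.eq_iff.mp h with ⟨hyx, -⟩ | ⟨hyz', -⟩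
      · exact hy.ne hyx.symm
      · exact hyz hyz'
    · exact hx' (p.bypass.snd_mem_support_of_mem_edges h)
  obtain ⟨D, hD, hsub⟩ := hcycle.isConnectedNoCutVertexSet.exists_isBlock_superset
  exact ⟨D, hD, hsub (by simp), hsub (by simp), hsub (by simp)⟩

lemma Connected.exists_walk_notMem_support (hconn : G.Connected) {r a x : V} (hax : a ≠ x)
    (h : G.dist r a ≤ G.dist r x) : ∃ p : G.Walk r a, x ∉ p.support := by
  obtain ⟨p, hp⟩ := hconn.exists_walk_length_eq_dist r a
  refine ⟨p, fun hx => ?_⟩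
  have := p.length_takeUntil_lt_length hx hax.symm
  have := G.dist_le (p.takeUntil x hx)
  omega

lemma Connected.exists_adj_dist_lt (hconn : G.Connected) {r x : V} (hrx : r ≠ x) :
    ∃ y, G.Adj y x ∧ G.dist r y < G.dist r x := by
  obtain ⟨p, hp⟩ := hconn.exists_walk_length_eq_dist r x
  have hnil : ¬ p.Nil := fun h => hrx h.eq
  refine ⟨p.penultimate, p.adj_penultimate hnil, ?_⟩
  have := G.dist_le p.dropLast
  have := p.length_dropLast_add_one hnil
  omega

lemma Connected.exists_isBlock_of_adj_of_dist_le [Finite V] (hconn : G.Connected) {r x y z : V}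
    (hy : G.Adj x y) (hz : G.Adj x z) (hyz : y ≠ z) (hdy : G.dist r y ≤ G.dist r x)
    (hdz : G.dist r z ≤ G.dist r x) : ∃ D, G.IsBlock D ∧ x ∈ D ∧ y ∈ D ∧ z ∈ D := by
  obtain ⟨p, hp⟩ := hconn.exists_walk_notMem_support hy.ne.symm hdy
  obtain ⟨q, hq⟩ := hconn.exists_walk_notMem_support hz.ne.symm hdz
  refine exists_isBlock_of_adj_of_walk hy hz hyz (q.reverse.append p) ?_
  rw [Walk.mem_support_append_iff, Walk.support_reverse, List.mem_reverse]
  tauto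

def IsNearestIn (G : SimpleGraph V) (r : V) (B : Set V) (c : V) : Prop :=
  c ∈ B ∧ ∀ x ∈ B, G.dist r c ≤ G.dist r x

lemma exists_isNearestIn [Finite V] {B : Set V} (hB : B.Nonempty) (r : V) :
    ∃ c, G.IsNearestIn r B c :=
  Set.exists_min_image B _ (Set.toFinite B) hB

lemma IsCliqueTree.dist_eq_add_one_of_isNearestIn [Finite V] {r c : V} {B : Set V}
    (hG : G.IsCliqueTree) (hB : G.IsBlock B) (hc : G.IsNearestIn r B c) {x : V} (hx : x ∈ B)
    (hxc : x ≠ c) :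
    G.dist r x = G.dist r c + 1 := by
  have hcx : G.Adj c x := hG.2 B hB hc.1 hx hxc.symm
  have hle : G.dist r x ≤ G.dist r c + 1 := by
    simpa [dist_eq_one_iff_adj.mpr hcx] using hcx.reachable.dist_triangle_right r
  suffices G.dist r x ≠ G.dist r c by have := hc.2 x hx; omega
  intro hxc_dist
  have hrx : r ≠ x := by
    rintro rfl
    exact hxc ((hG.1.dist_eq_zero_iff.mp (by simpa using hxc_dist.symm)))
  obtain ⟨y, hyx, hy⟩ := hG.1.exists_adj_dist_lt hrx
  obtain ⟨D, hD, hxD, hyD, hcD⟩ := hG.1.exists_isBlock_of_adj_of_dist_le hyx.symm hcx.symm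
    (by rintro rfl; omega) hy.le hxc_dist.ge
  have hDB : D = B := hD.eq_of_mem_inter hB ⟨hxD, hx⟩ ⟨hcD, hc.1⟩ hxc
  have := hc.2 y (hDB ▸ hyD)
  omega

lemma IsCliqueTree.eq_or_eq_of_mem_inter [Finite V] {r c c' v : V} {B B' : Set V}
    (hG : G.IsCliqueTree) (hB : G.IsBlock B) (hB' : G.IsBlock B') (hBB' : B ≠ B')
    (hc : G.IsNearestIn r B c) (hc' : G.IsNearestIn r B' c') (hv : v ∈ B) (hv' : v ∈ B') :
    v = c ∨ v = c' := by
  by_contra! ⟨hvc, hvc'⟩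
  have hd := hG.dist_eq_add_one_of_isNearestIn hB hc hv hvc
  have hd' := hG.dist_eq_add_one_of_isNearestIn hB' hc' hv' hvc'
  have hcc' : c ≠ c' := fun h => hBB' (hB.eq_of_mem_inter hB' ⟨hv, hv'⟩ ⟨hc.1, h ▸ hc'.1⟩ hvc)
  obtain ⟨D, hD, hvD, hcD, hc'D⟩ := hG.1.exists_isBlock_of_adj_of_dist_le (r := r)
    (hG.2 B hB hv hc.1 hvc) (hG.2 B' hB' hv' hc'.1 hvc') hcc' (by omega) (by omega)
  exact hBB' ((hB.eq_of_mem_inter hD ⟨hv, hvD⟩ ⟨hc.1, hcD⟩ hvc).trans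
    (hD.eq_of_mem_inter hB' ⟨hvD, hv'⟩ ⟨hc'D, hc'.1⟩ hvc'))

section ZeroForcing

variable {S T : Set V}

lemma Forced.mono {v : V} (h : G.Forced S v) (hST : S ⊆ T) : G.Forced T v := by
  induction h with
  | init v hv => exact .init v (hST hv)
  | force u w _ hadj _ ihu ihothers => exact .force u w ihu hadj ihothers

lemma IsZeroForcingSet.mono (hS : G.IsZeroForcingSet S) (hST : S ⊆ T) :
    G.IsZeroForcingSet T :=
  fun v => (hS v).mono hST

lemma IsZeroForcingSet.exists_force (hS : G.IsZeroForcingSet S) {v : V} (hv : v ∉ S) :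
    ∃ u ∈ S, ∃ w ∉ S, G.Adj u w ∧ ∀ y, G.Adj u y → y ≠ w → y ∈ S := by
  by_contra! hclosed
  suffices ∀ x, G.Forced S x → x ∈ S from hv (this v (hS v))
  intro x hx
  induction hx with
  | init x hx => exact hx
  | force u w _ hadj _ ihu ihothers =>
    by_contra hw
    obtain ⟨y, hy, hyw, hyS⟩ := hclosed u ihu w hw hadj
    exact hyS (ihothers y hy hyw)

lemma IsZeroForcingSet.ncard_compl_le [Finite V] {ι : Type*} [Fintype ι] {K : ι → Set V}
    (hK : ∀ i, G.IsClique (K i)) (hcover : ∀ u v, G.Adj u v → ∃ i, u ∈ K i ∧ v ∈ K i)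
    (hS : G.IsZeroForcingSet S) : Sᶜ.ncard ≤ (Finset.univ.filter fun i => ¬ K i ⊆ S).card := by
  induction h : Sᶜ.ncard generalizing S with
  | zero => exact Nat.zero_le _
  | succ n ih =>
    -- The first force `u → w` turns blue the last white vertex of a clique containing `u, w`.
    obtain ⟨v, hv⟩ : Sᶜ.Nonempty := Set.nonempty_of_ncard_ne_zero (by omega)
    obtain ⟨u, hu, w, hw, huw, hothers⟩ := hS.exists_force hv
    obtain ⟨i, hui, hwi⟩ := hcover u w huw
    have hKi : K i ⊆ insert w S := by
      intro x hx
      by_cases hxw : x = w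
      · exact .inl hxw
      by_cases hxu : x = u
      · exact .inr (hxu ▸ hu)
      exact .inr (hothers x (hK i hui hx (Ne.symm hxu)) hxw)
    have hn : (insert w S)ᶜ.ncard = n := by
      have := Set.ncard_insert_of_notMem hw
      rw [Set.ncard_compl] at h ⊢
      omega
    have hlt : (Finset.univ.filter fun i => ¬ K i ⊆ insert w S).card <
        (Finset.univ.filter fun i => ¬ K i ⊆ S).card := by
      refine Finset.card_lt_card ((Finset.ssubset_iff_of_subset ?_).mpr ⟨i, ?_, ?_⟩)
      · intro j
        simp only [Finset.mem_filter, Finset.mem_univ, true_and]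
        exact fun hj hjS => hj (hjS.trans (Set.subset_insert w S))
      · simpa using fun hiS => hw (hiS hwi)
      · simpa using hKi
    have := ih (hS.mono (Set.subset_insert w S)) hn
    omega

lemma zeroForcingNumber_eq_of_isZeroForcingSet {n : ℕ} (hS : G.IsZeroForcingSet S)
    (hSn : S.ncard = n) (hle : ∀ T, G.IsZeroForcingSet T → n ≤ T.ncard) :
    G.zeroForcingNumber = n :=
  IsLeast.csInf_eq ⟨⟨S, hSn, hS⟩, by rintro _ ⟨T, rfl, hT⟩; exact hle T hT⟩

lemma zeroForcingNumber_top [Finite V] [Nontrivial V] :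
    (⊤ : SimpleGraph V).zeroForcingNumber = Nat.card V - 1 := by
  obtain ⟨x⟩ : Nonempty V := inferInstance
  refine zeroForcingNumber_eq_of_isZeroForcingSet (S := {x}ᶜ) ?_ ?_ ?_
  · intro v
    by_cases hv : v = x
    · obtain ⟨u, hu⟩ := exists_ne v
      exact .force u v (.init u (hv ▸ hu)) hu (fun y _ hy => .init y (hv ▸ hy))
    · exact .init v hv
  · rw [Set.ncard_compl, Set.ncard_singleton]
  · intro T hT
    have hK := hT.ncard_compl_le (K := fun _ : Unit => Set.univ)
      (fun _ => isClique_univ.mpr rfl) fun _ _ _ => ⟨(), trivial, trivial⟩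
    have := (Finset.card_le_univ (Finset.univ.filter fun _ => ¬ Set.univ ⊆ T)).trans_eq
      Fintype.card_unit
    have := T.ncard_add_ncard_compl
    omega

lemma IsClique.zeroForcingNumber_induce [Finite V] {s : Set V} (hs : G.IsClique s)
    (hcard : 1 < s.ncard) : (G.induce s).zeroForcingNumber = s.ncard - 1 := by
  have : Nontrivial s := Set.nontrivial_coe_sort.mpr (Set.one_lt_ncard_iff_nontrivial.mp hcard)
  rw [induce_eq_top.mpr hs, zeroForcingNumber_top, Nat.card_coe_set_eq]

end ZeroForcing

section CliqueTree

variable {ι : Type*} {B : ι → Set V} {r : V} {c w : ι → V}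

lemma exists_subset_of_isConnectedNoCutVertexSet [Finite V]
    (hall : ∀ C : Set V, G.IsBlock C → ∃ i, C = B i) {A : Set V}
    (hA : G.IsConnectedNoCutVertexSet A) : ∃ i, A ⊆ B i := by
  obtain ⟨D, hD, hAD⟩ := hA.exists_isBlock_superset
  obtain ⟨i, rfl⟩ := hall D hD
  exact ⟨i, hAD⟩

lemma IsCliqueTree.eq_of_mem_of_mem [Finite V] (hG : G.IsCliqueTree)
    (hinj : Function.Injective B) (hblock : ∀ i, G.IsBlock (B i))
    (hc : ∀ i, G.IsNearestIn r (B i) (c i)) {i k : ι} {x : V}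
    (hxi : x ∈ B i) (hxk : x ∈ B k) (hxci : x ≠ c i) (hxck : x ≠ c k) : i = k := by
  by_contra hik
  exact (hG.eq_or_eq_of_mem_inter (hblock i) (hblock k) (hinj.ne hik) (hc i) (hc k) hxi
    hxk).elim hxci hxck

lemma IsCliqueTree.exists_forced_not_forced_of_forced_not_forced [Finite V]
    (hG : G.IsCliqueTree) (hinj : Function.Injective B) (hblock : ∀ i, G.IsBlock (B i))
    (hall : ∀ C : Set V, G.IsBlock C → ∃ i, C = B i) (hsize : ∀ i, 3 ≤ (B i).ncard)
    (hc : ∀ i, G.IsNearestIn r (B i) (c i)) (hw : ∀ i, w i ∈ B i ∧ w i ≠ c i) {i : ι}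
    (hci : G.Forced (Set.range w)ᶜ (c i)) (hwi : ¬ G.Forced (Set.range w)ᶜ (w i)) :
    ∃ k, G.Forced (Set.range w)ᶜ (c k) ∧ ¬ G.Forced (Set.range w)ᶜ (w k) ∧
      G.dist r (c i) < G.dist r (c k) := by
  have hunique : ∀ {i k : ι} {x : V}, x ∈ B i → x ∈ B k → x ≠ c i → x ≠ c k → i = k :=
    hG.eq_of_mem_of_mem hinj hblock hc
  -- A third vertex `u` of `B i` is blue and would force `w i`, unless it has another white
  -- neighbour `w k`; then `u` must be the nearest vertex of the deeper block `B k`.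
  obtain ⟨u, ⟨hui, huc⟩, huw⟩ := Set.exists_ne_of_one_lt_ncard (s := B i \ {c i})
    (by have := Set.pred_ncard_le_ncard_sdiff_singleton (B i) (c i); have := hsize i; omega)
    (w i)
  have huS : u ∈ (Set.range w)ᶜ := by
    rintro ⟨k, rfl⟩
    exact huw (congrArg w (hunique (hw k).1 hui (hw k).2 huc))
  obtain ⟨y, huy, hyw, hy⟩ : ∃ y, G.Adj u y ∧ y ≠ w i ∧ ¬ G.Forced (Set.range w)ᶜ y := by
    by_contra! h
    exact hwi (.force u (w i) (.init u huS) (hG.2 _ (hblock i) hui (hw i).1 huw) h)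
  obtain ⟨k, rfl⟩ : y ∈ Set.range w := by_contra fun h => hy (.init _ h)
  obtain ⟨m, hum⟩ := exists_subset_of_isConnectedNoCutVertexSet hall
    (isConnectedNoCutVertexSet_pair huy)
  have hmk : m = k := by
    by_contra hmk
    have hwc : w k = c m := by_contra fun h => hmk (hunique (hum (by simp)) (hw k).1 h (hw k).2)
    have hmi : m = i := hunique (hum (by simp)) hui (hwc ▸ huy.ne) huc
    exact hy (hwc ▸ hmi ▸ hci)
  subst hmk
  have huc' : u = c m := by_contra fun h => hyw (congrArg w (hunique (hum (by simp)) hui h huc))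
  refine ⟨m, huc' ▸ .init u huS, hy, ?_⟩
  have := hG.dist_eq_add_one_of_isNearestIn (hblock i) (hc i) hui huc
  rw [← huc']
  omega

lemma IsCliqueTree.forced_of_forced_nearest [Finite V] [Finite ι] (hG : G.IsCliqueTree)
    (hinj : Function.Injective B) (hblock : ∀ i, G.IsBlock (B i))
    (hall : ∀ C : Set V, G.IsBlock C → ∃ i, C = B i) (hsize : ∀ i, 3 ≤ (B i).ncard)
    (hc : ∀ i, G.IsNearestIn r (B i) (c i)) (hw : ∀ i, w i ∈ B i ∧ w i ≠ c i) {i : ι}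
    (hci : G.Forced (Set.range w)ᶜ (c i)) : G.Forced (Set.range w)ᶜ (w i) := by
  by_contra hwi
  obtain ⟨j, ⟨hcj, hwj⟩, hmax⟩ := Set.exists_max_image
    {j | G.Forced (Set.range w)ᶜ (c j) ∧ ¬ G.Forced (Set.range w)ᶜ (w j)}
    (fun j => G.dist r (c j)) (Set.toFinite _) ⟨i, hci, hwi⟩
  obtain ⟨k, hck, hwk, hlt⟩ :=
    hG.exists_forced_not_forced_of_forced_not_forced hinj hblock hall hsize hc hw hcj hwj
  exact (hmax k ⟨hck, hwk⟩).not_gt hlt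

lemma IsCliqueTree.isZeroForcingSet_compl_range [Finite V] [Finite ι] (hG : G.IsCliqueTree)
    (hinj : Function.Injective B) (hblock : ∀ i, G.IsBlock (B i))
    (hall : ∀ C : Set V, G.IsBlock C → ∃ i, C = B i) (hsize : ∀ i, 3 ≤ (B i).ncard)
    (hc : ∀ i, G.IsNearestIn r (B i) (c i)) (hw : ∀ i, w i ∈ B i ∧ w i ≠ c i) :
    G.IsZeroForcingSet (Set.range w)ᶜ := by
  intro v
  by_cases hv : v ∈ (Set.range w)ᶜ
  · exact .init v hv
  obtain ⟨i, rfl⟩ := not_not.mp hv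
  -- Induct on the depth of `B i`: its nearest vertex is blue or is the white vertex of a
  -- shallower block.
  induction hd : G.dist r (c i) using Nat.strong_induction_on generalizing i with
  | _ n ih =>
    refine hG.forced_of_forced_nearest hinj hblock hall hsize hc hw ?_
    by_cases hci : c i ∈ (Set.range w)ᶜ
    · exact .init _ hci
    obtain ⟨j, hj⟩ := not_not.mp hci
    have := hG.dist_eq_add_one_of_isNearestIn (hblock j) (hc j) (hw j).1 (hw j).2
    rw [← hj]
    exact ih _ (by rw [← hd, ← hj]; omega) j (by simp) rfl

lemma IsCliqueTree.zeroForcingNumber_eq [Fintype V] [Fintype ι] (hG : G.IsCliqueTree)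
    (hinj : Function.Injective B) (hblock : ∀ i, G.IsBlock (B i))
    (hall : ∀ C : Set V, G.IsBlock C → ∃ i, C = B i) (hsize : ∀ i, 3 ≤ (B i).ncard) :
    G.zeroForcingNumber = Fintype.card V - Fintype.card ι := by
  obtain ⟨r⟩ := hG.1.nonempty
  choose c hc using fun i => exists_isNearestIn (G := G)
    (Set.nonempty_of_ncard_ne_zero (s := B i) (by have := hsize i; omega)) r
  choose w hwB hwc using fun i =>
    Set.exists_ne_of_one_lt_ncard (by have := hsize i; omega : 1 < (B i).ncard) (c i)
  have hwinj : Function.Injective w := fun i j hij =>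
    hG.eq_of_mem_of_mem hinj hblock hc (hwB i) (hij ▸ hwB j) (hwc i) (hij ▸ hwc j)
  refine zeroForcingNumber_eq_of_isZeroForcingSet
    (hG.isZeroForcingSet_compl_range hinj hblock hall hsize hc fun i => ⟨hwB i, hwc i⟩) ?_ ?_
  · rw [Set.ncard_compl, Set.ncard_range_of_injective hwinj, Nat.card_eq_fintype_card,
      Nat.card_eq_fintype_card]
  · intro T hT
    have hT' := hT.ncard_compl_le (fun i => hG.2 _ (hblock i)) fun u v huv =>
      (exists_subset_of_isConnectedNoCutVertexSet hall (isConnectedNoCutVertexSet_pair huv)).imp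
        fun i hi => ⟨hi (by simp), hi (by simp)⟩
    have := Finset.card_le_univ (Finset.univ.filter fun i => ¬ B i ⊆ T)
    have := T.ncard_add_ncard_compl
    rw [Nat.card_eq_fintype_card] at this
    omega

end CliqueTree

end SimpleGraph

lemma Finset.sum_ncard_sub_one_sub_sum_card_filter_mem_sub_one {V ι : Type*} [Fintype V]
    [Fintype ι] (B : ι → Set V) (hB : ∀ i, (B i).Nonempty) (hV : ∀ v, ∃ i, v ∈ B i) :
    (∑ i, ((B i).ncard - 1)) - ∑ v, ((Finset.univ.filter fun i => v ∈ B i).card - 1) =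
      Fintype.card V - Fintype.card ι := by
  have hdouble : ∑ v, (Finset.univ.filter fun i => v ∈ B i).card = ∑ i, (B i).ncard := by
    have := Finset.sum_card_bipartiteAbove_eq_sum_card_bipartiteBelow (s := Finset.univ)
      (t := Finset.univ) (r := fun (v : V) (i : ι) => v ∈ B i)
    simp only [Finset.bipartiteAbove, Finset.bipartiteBelow] at this
    rw [this]
    refine Finset.sum_congr rfl fun i _ => ?_
    rw [Set.ncard_eq_toFinset_card']
    congr 1
    ext v
    simp
  have hcard : ∀ v, 1 ≤ (Finset.univ.filter fun i => v ∈ B i).card := by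
    intro v
    obtain ⟨i, hi⟩ := hV v
    exact Finset.card_pos.mpr ⟨i, by simpa using hi⟩
  have hle : Fintype.card V ≤ ∑ i, (B i).ncard := by
    simpa [← hdouble] using Finset.sum_le_sum fun v (_ : v ∈ Finset.univ) => hcard v
  rw [Finset.sum_tsub_distrib _ fun i _ => (Set.ncard_pos (Set.toFinite _)).mpr (hB i),
    Finset.sum_tsub_distrib _ fun v _ => hcard v, hdouble]
  simp only [Finset.sum_const, Finset.card_univ, smul_eq_mul, mul_one]
  omega

/-- Let `G` be a clique tree with `b` blocks `B₁, …, B_b`, each of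
size at least 3.  Then `Z(G) = ∑ᵢ Z(Bᵢ) − ∑_{v ∈ V(G)} (bi_G(v) − 1)`, where
`bi_G(v)` is the number of blocks of `G` containing `v`. -/
theorem zeroForcing_blocks_formula {V : Type*} [Fintype V] (G : SimpleGraph V)
    (hG : G.IsCliqueTree)
    (b : ℕ) (B : Fin b → Set V) (hinj : Function.Injective B)
    (hblock : ∀ i, G.IsBlock (B i))
    (hall : ∀ C : Set V, G.IsBlock C → ∃ i, C = B i)
    (hsize : ∀ i, 3 ≤ (B i).ncard) :
    G.zeroForcingNumber =
      (∑ i, (G.induce (B i)).zeroForcingNumber) -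
        ∑ v : V, ((Finset.univ.filter fun i => v ∈ B i).card - 1) := by
  have hblockZ : ∀ i, (G.induce (B i)).zeroForcingNumber = (B i).ncard - 1 := fun i =>
    (hG.2 _ (hblock i)).zeroForcingNumber_induce (by have := hsize i; omega)
  have hmem : ∀ v, ∃ i, v ∈ B i := fun v =>
    (SimpleGraph.exists_subset_of_isConnectedNoCutVertexSet hall
      (SimpleGraph.isConnectedNoCutVertexSet_singleton v)).imp fun _ hi => hi rfl
  rw [hG.zeroForcingNumber_eq hinj hblock hall hsize, Finset.sum_congr rfl fun i _ => hblockZ i,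
    Finset.sum_ncard_sub_one_sub_sum_card_filter_mem_sub_one B
      (fun i => Set.nonempty_of_ncard_ne_zero (by have := hsize i; omega)) hmem,
    Fintype.card_fin]
end

section
/- Let G be a connected clique tree with adjacency matrix A and let (ρ(G), x) be the eigenpair corresponding to the Perron value, where x is an entrywise positive eigenvector. Let m ≥ 3 and let K_m be a pendant block of G with vertex set {v₁, …, v_m}, where v₁ is the cut vertex contained in this block. Then x_{v₁} > x_{v_i} for all 2 ≤ i ≤ m, and x_{v_i} = x_{v_j} for all i, j ∈ {2, 3, …, m}. -/
open Classical

/-!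
Let `u ≠ v₁` be a vertex of the pendant block `B`. Since `u` is not a cut vertex, its
neighbourhood is exactly `B \ {u}`: an edge leaving `B` would, together with a path in `G - u`
back to `B`, form an ear enlarging the 2-connected set `B`. Hence the eigen-equation at `u` reads
`(ρ + 1) x_u = ∑_{j ∈ B} x_j`, the same for every such `u`. The cut vertex `v₁` is adjacent to all
of `B \ {v₁}` and, as its neighbourhood is not a clique, also to some `z ∉ B`, so
`(ρ + 1) x_{v₁} ≥ ∑_{j ∈ B} x_j + x_z > (ρ + 1) x_u`.
-/

namespace SimpleGraph

variable {V : Type*} {G : SimpleGraph V}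

theorem Walk.IsPath.notMem_support_takeUntil_or_dropUntil {s t a v : V} {P : G.Walk s t}
    (hP : P.IsPath) (ha : a ∈ P.support) (hva : v ≠ a) :
    v ∉ (P.takeUntil a ha).support ∨ v ∉ (P.dropUntil a ha).support := by
  by_contra! h
  obtain ⟨htake, hdrop⟩ := h
  have hnodup := hP.support_nodup
  rw [← P.take_spec ha, Walk.support_append] at hnodup
  rw [← Walk.cons_tail_support (P.dropUntil a ha)] at hdrop
  exact List.disjoint_of_nodup_append hnodup htake ((List.mem_cons.mp hdrop).resolve_left hva)

theorem IsConnectedNoCutVertexSet.connected_induce_diff_singleton {S : Set V}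
    (hS : G.IsConnectedNoCutVertexSet S) (hSnt : S.Nontrivial) (v : V) :
    (G.induce (S \ {v})).Connected := by
  by_cases hv : v ∈ S
  · refine (hS.2 v hv).resolve_left fun hempty => ?_
    obtain ⟨w, hwS, hwv⟩ := hSnt.exists_ne v
    exact (hempty ▸ ⟨hwS, hwv⟩ : w ∈ (∅ : Set V))
  · rw [Set.sdiff_singleton_eq_self hv]
    exact hS.1

/-- Ear addition: every vertex of the path reaches one of its ends while avoiding any given
vertex. -/
theorem IsConnectedNoCutVertexSet.union_support {S : Set V}
    (hS : G.IsConnectedNoCutVertexSet S) {s t : V} (hs : s ∈ S) (ht : t ∈ S) (hst : s ≠ t)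
    {P : G.Walk s t} (hP : P.IsPath) :
    G.IsConnectedNoCutVertexSet (S ∪ {y | y ∈ P.support}) := by
  have hSnt : S.Nontrivial := ⟨s, hs, t, ht, hst⟩
  refine ⟨induce_union_connected hS.1.preconnected P.connected_induce_support.preconnected
    ⟨s, hs, P.start_mem_support⟩, fun v _ => Or.inr ?_⟩
  obtain ⟨h, hhS, hhv⟩ := hSnt.exists_ne v
  have hSv := hS.connected_induce_diff_singleton hSnt v
  refine induce_connected_of_patches h ⟨Or.inl hhS, hhv⟩ fun {a} ha => ?_
  obtain ⟨haS | haP, hav⟩ := ha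
  · exact ⟨S \ {v}, Set.sdiff_subset_sdiff_left Set.subset_union_left, ⟨hhS, hhv⟩, ⟨haS, hav⟩,
      hSv.preconnected _ _⟩
  obtain ⟨e, heS, Q, hQP, hvQ⟩ : ∃ e ∈ S, ∃ Q : G.Walk a e,
      (∀ y ∈ Q.support, y ∈ P.support) ∧ v ∉ Q.support := by
    rcases hP.notMem_support_takeUntil_or_dropUntil haP (Ne.symm hav) with h | h
    · exact ⟨s, hs, (P.takeUntil a haP).reverse,
        fun y hy => P.support_takeUntil_subset_support haP (by simpa using hy), by simpa using h⟩
    · exact ⟨t, ht, P.dropUntil a haP, fun y hy => P.support_dropUntil_subset_support haP hy, h⟩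
  refine ⟨S \ {v} ∪ {y | y ∈ Q.support}, ?_, Or.inl ⟨hhS, hhv⟩, Or.inr Q.start_mem_support,
    (induce_union_connected hSv.preconnected Q.connected_induce_support.preconnected
      ⟨e, ⟨heS, fun h => hvQ (h ▸ Q.end_mem_support)⟩, Q.end_mem_support⟩).preconnected _ _⟩
  rintro y (⟨hyS, hyv⟩ | hyQ)
  · exact ⟨Or.inl hyS, hyv⟩
  · exact ⟨Or.inr (hQP y hyQ), fun h => hvQ (h ▸ hyQ)⟩

theorem exists_walk_of_reachable_induce {s : Set V} {a b : s} (h : (G.induce s).Reachable a b) :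
    ∃ W : G.Walk a b, ∀ y ∈ W.support, y ∈ s := by
  obtain ⟨W⟩ := h
  refine ⟨W.map (Embedding.induce s).toHom, fun y hy => ?_⟩
  have hy' : y ∈ (W.map (Embedding.induce s).toHom).support := hy
  obtain ⟨y', -, rfl⟩ := List.mem_map.1 ((Walk.support_map _ _) ▸ hy')
  exact y'.2

theorem IsBlock.mem_of_adj {B : Set V} (hB : G.IsBlock B) {u b z : V} (hu : u ∈ B)
    (hb : b ∈ B) (hbu : b ≠ u) (hconn : (G.induce ({u}ᶜ : Set V)).Connected)
    (hz : G.Adj u z) : z ∈ B := by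
  obtain ⟨W, hWu⟩ := exists_walk_of_reachable_induce <|
    hconn.preconnected ⟨z, Set.mem_compl_singleton_iff.2 hz.ne'⟩
      ⟨b, Set.mem_compl_singleton_iff.2 hbu⟩
  have hP : (Walk.cons hz W.bypass).IsPath :=
    W.bypass_isPath.cons fun h => hWu u (W.support_bypass_subset_support h) rfl
  rw [hB.2 _ Set.subset_union_left (hB.1.union_support hu hb hbu.symm hP)]
  exact Or.inr (by simp)

theorem IsBlock.neighborSet_eq {B : Set V} (hB : G.IsBlock B) (hBc : G.IsClique B)
    (hBnt : B.Nontrivial) {u : V} (hu : u ∈ B)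
    (hconn : (G.induce ({u}ᶜ : Set V)).Connected) : G.neighborSet u = B \ {u} := by
  obtain ⟨b, hb, hbu⟩ := hBnt.exists_ne u
  ext z
  exact ⟨fun hz => ⟨hB.mem_of_adj hu hb hbu hconn hz, hz.ne'⟩,
    fun ⟨hz, hzu⟩ => hBc hu hz (Ne.symm hzu)⟩

theorem exists_adj_reachable_induce_compl_singleton (hG : G.Preconnected) {v y : V}
    (hy : y ≠ v) : ∃ (n : V) (hn : n ≠ v), G.Adj n v ∧
      (G.induce ({v}ᶜ : Set V)).Reachable ⟨y, hy⟩ ⟨n, hn⟩ := by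
  suffices h : ∀ {y w : V} (W : G.Walk y w), w = v → ∀ hy : y ≠ v, ∃ (n : V) (hn : n ≠ v),
      G.Adj n v ∧ (G.induce ({v}ᶜ : Set V)).Reachable ⟨y, hy⟩ ⟨n, hn⟩ from
    (hG y v).elim (h · rfl hy)
  intro y w W
  induction W with
  | nil => exact fun hw hy => absurd hw hy
  | @cons y c w hadj W ih =>
    rintro rfl hy
    by_cases hc : c = w
    · exact ⟨y, hy, hc ▸ hadj, .rfl⟩
    · obtain ⟨n, hn, hnv, hr⟩ := ih rfl hc
      have hyc : (G.induce ({w}ᶜ : Set V)).Adj ⟨y, hy⟩ ⟨c, hc⟩ := induce_adj.2 hadj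
      exact ⟨n, hn, hnv, hyc.reachable.trans hr⟩

/-- A simplicial vertex is not a cut vertex: every other vertex reaches one of its neighbors
while avoiding it, and these neighbors are pairwise adjacent. -/
theorem connected_induce_compl_singleton_of_isClique_neighborSet (hG : G.Connected)
    {v w : V} (hw : w ≠ v) (hv : G.IsClique (G.neighborSet v)) :
    (G.induce ({v}ᶜ : Set V)).Connected := by
  obtain ⟨n₀, hn₀, hn₀v, -⟩ := exists_adj_reachable_induce_compl_singleton hG.preconnected hw
  rw [connected_iff_exists_forall_reachable]
  refine ⟨⟨n₀, hn₀⟩, fun ⟨y, hy⟩ => ?_⟩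
  obtain ⟨n, hn, hnv, hr⟩ := exists_adj_reachable_induce_compl_singleton hG.preconnected hy
  refine (hr.trans ?_).symm
  by_cases h : n = n₀
  · subst h; rfl
  · exact (induce_adj.2 (hv hnv.symm hn₀v.symm h) : (G.induce _).Adj ⟨n, hn⟩ ⟨n₀, hn₀⟩).reachable

theorem IsCutVertex.exists_adj_notMem {v b : V} (hcut : G.IsCutVertex v) (hbv : b ≠ v)
    {B : Set V} (hB : G.IsClique B) : ∃ z, G.Adj v z ∧ z ∉ B := by
  by_contra! h
  exact hcut.2 (connected_induce_compl_singleton_of_isClique_neighborSet hcut.1 hbv (hB.subset h))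

section Eigenvector

variable [Fintype V] {x : V → ℝ} {ρ : ℝ}

theorem sum_neighborFinset_eq_of_mulVec_eq_smul (heig : G.adjMatR.mulVec x = ρ • x) (a : V) :
    ∑ j ∈ G.neighborFinset a, x j = ρ * x a := by
  rw [← adjMatrix_mulVec_apply, ← smul_eq_mul, ← Pi.smul_apply, ← heig]
  rfl

theorem pos_of_mulVec_eq_smul (heig : G.adjMatR.mulVec x = ρ • x) (hx : ∀ v, 0 < x v)
    {a b : V} (hab : G.Adj a b) : 0 < ρ := by
  refine pos_of_mul_pos_left ?_ (hx a).le
  rw [← sum_neighborFinset_eq_of_mulVec_eq_smul heig]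
  exact Finset.sum_pos' (fun j _ => (hx j).le) ⟨b, (G.mem_neighborFinset a b).2 hab, hx b⟩

theorem add_one_mul_eq_sum_of_neighborSet_eq (heig : G.adjMatR.mulVec x = ρ • x) {s : Set V}
    {u : V} (hu : u ∈ s) (hN : G.neighborSet u = s \ {u}) :
    (ρ + 1) * x u = ∑ j ∈ s.toFinset, x j := by
  have hNf : G.neighborFinset u = s.toFinset.erase u :=
    Finset.coe_injective (by rw [coe_neighborFinset, Finset.coe_erase, Set.coe_toFinset, hN])
  rw [add_one_mul, ← sum_neighborFinset_eq_of_mulVec_eq_smul heig, hNf,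
    Finset.sum_erase_add _ _ (Set.mem_toFinset.2 hu)]

theorem sum_lt_add_one_mul_of_adj_notMem (heig : G.adjMatR.mulVec x = ρ • x) (hx : ∀ v, 0 < x v)
    {s : Set V} {v z : V} (hv : v ∈ s) (hN : s \ {v} ⊆ G.neighborSet v) (hz : G.Adj v z)
    (hzs : z ∉ s) : ∑ j ∈ s.toFinset, x j < (ρ + 1) * x v := by
  have hzs' : z ∉ s.toFinset.erase v := fun h =>
    hzs (Set.mem_toFinset.1 (Finset.mem_of_mem_erase h))
  have hsub : insert z (s.toFinset.erase v) ⊆ G.neighborFinset v := by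
    refine Finset.insert_subset ((G.mem_neighborFinset v z).2 hz) fun j hj => ?_
    obtain ⟨hjv, hjs⟩ := Finset.mem_erase.1 hj
    exact (G.mem_neighborFinset v j).2 (hN ⟨Set.mem_toFinset.1 hjs, hjv⟩)
  calc ∑ j ∈ s.toFinset, x j = ∑ j ∈ s.toFinset.erase v, x j + x v :=
        (Finset.sum_erase_add _ _ (Set.mem_toFinset.2 hv)).symm
    _ < ∑ j ∈ insert z (s.toFinset.erase v), x j + x v := by
        rw [Finset.sum_insert hzs']; linarith [hx z]
    _ ≤ ∑ j ∈ G.neighborFinset v, x j + x v := by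
        grw [Finset.sum_le_sum_of_subset_of_nonneg hsub fun j _ _ => (hx j).le]
    _ = (ρ + 1) * x v := by rw [sum_neighborFinset_eq_of_mulVec_eq_smul heig, add_one_mul]

end Eigenvector

end SimpleGraph

open SimpleGraph in
/-- Let `G` be a connected clique tree with Perron eigenpair
`(ρ(G), x)` (`x` entrywise positive), and let `K_m` (`m ≥ 3`) be a pendant block
of `G` with vertex set `{v₁, …, v_m}`, `v₁` being the cut vertex.  Then
`x_{v₁} > x_{v_i}` for all `2 ≤ i ≤ m`, and `x_{v_i} = x_{v_j}` for all
`i, j ∈ {2, …, m}`. -/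
theorem perron_entries_pendant_block {V : Type*} [Fintype V] (G : SimpleGraph V)
    (hG : G.IsCliqueTree)
    (m : ℕ) (hm : 3 ≤ m)
    (B : Set V) (hB : G.IsBlock B) (hBcard : B.ncard = m)
    (v₁ : V) (hv₁ : v₁ ∈ B) (hcut : G.IsCutVertex v₁)
    (hpendant : ∀ u ∈ B, G.IsCutVertex u → u = v₁)
    (x : V → ℝ) (hx : ∀ v, 0 < x v)
    (heig : G.adjMatR.mulVec x = G.specRad • x) :
    (∀ u ∈ B, u ≠ v₁ → x u < x v₁) ∧
      (∀ u ∈ B, ∀ w ∈ B, u ≠ v₁ → w ≠ v₁ → x u = x w) := by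
  obtain ⟨hconn, hcliques⟩ := hG
  have hBc := hcliques B hB
  have hBnt : B.Nontrivial := Set.one_lt_ncard_iff_nontrivial.mp (by omega)
  obtain ⟨b, -, hbv₁⟩ := hBnt.exists_ne v₁
  obtain ⟨z, hv₁z, hzB⟩ := hcut.exists_adj_notMem hbv₁ hBc
  have hρ : 0 < G.specRad + 1 := by linarith [pos_of_mulVec_eq_smul heig hx hv₁z]
  have hsum : ∀ u ∈ B, u ≠ v₁ → (G.specRad + 1) * x u = ∑ j ∈ B.toFinset, x j := by
    intro u hu huv₁
    have hconn_u : (G.induce ({u}ᶜ : Set V)).Connected :=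
      not_not.mp fun h => huv₁ (hpendant u hu ⟨hconn, h⟩)
    exact add_one_mul_eq_sum_of_neighborSet_eq heig hu (hB.neighborSet_eq hBc hBnt hu hconn_u)
  have hsum_lt : ∑ j ∈ B.toFinset, x j < (G.specRad + 1) * x v₁ :=
    sum_lt_add_one_mul_of_adj_notMem heig hx hv₁ (fun j ⟨hj, hjv₁⟩ => hBc hv₁ hj (Ne.symm hjv₁))
      hv₁z hzB
  refine ⟨fun u hu huv₁ => ?_, fun u hu w hw huv₁ hwv₁ => ?_⟩
  · exact lt_of_mul_lt_mul_left ((hsum u hu huv₁).trans_lt hsum_lt) hρ.le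
  · exact mul_left_cancel₀ hρ.ne' ((hsum u hu huv₁).trans (hsum w hw hwv₁).symm)
end

section
/- Let n, k be integers with ⌊n/2⌋ + 1 ≤ k ≤ n − 2. For each of the k − 1 vectors in the set E₁ = {e(v₁) − e(v_j) : 2 ≤ j ≤ 2k−n+1} ∪ {e(u₁^{(i)}) − e(u₂^{(i)}) : 1 ≤ i ≤ n−k−1}, the adjacency matrix A(𝒢(n,k)) satisfies A x = −x; consequently −1 is an eigenvalue of A(𝒢(n,k)) of multiplicity at least k − 1, and in fact exactly k − 1. -/
/-!
Two vertices of the same block of `𝒢(n,k)`, neither of them the centre `v`, are adjacent twins,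
so the difference of their indicator vectors is a `(-1)`-eigenvector. Since `A` is symmetric, the
multiplicity of `-1` is `dim ker (A + I)`. For `u ≠ v`, `((A + I) x) u` is the sum of `x` over the
block of `u`, while `((A + I) x) v` is the total sum, i.e. the sum of the `n - k` block sums minus
`(n - k - 1) • x v`. Hence `ker (A + I)` is cut out by the `n - k + 1` independent functionals
`x ↦ x v` and the block sums, and has dimension `n - (n - k + 1) = k - 1`.
-/

open Classical

open Matrix Module Finset

theorem Matrix.IsHermitian.rootMultiplicity_charpoly_eq_finrank_ker {n 𝕜 : Type*} [RCLike 𝕜]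
    [Fintype n] [DecidableEq n] {A : Matrix n n 𝕜} (hA : A.IsHermitian) (μ : 𝕜) :
    A.charpoly.rootMultiplicity μ = finrank 𝕜 (LinearMap.ker (A - μ • 1).mulVecLin) := by
  have hφ : End.IsFinitelySemisimple (toEuclideanLin A) :=
    (isSymmetric_toEuclideanLin_iff.mpr hA).isFinitelySemisimple
  rw [← charpoly_toLin (b := PiLp.basisFun 2 𝕜 n), ← toLpLin_eq_toLin,
    ← LinearMap.finrank_maxGenEigenspace_eq, hφ.maxGenEigenspace_eq_eigenspace,
    End.eigenspace_def]
  have hconj : toEuclideanLin A - μ • 1 =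
      (WithLp.linearEquiv 2 𝕜 (n → 𝕜)).symm.conj (A - μ • 1).mulVecLin := by
    ext x i
    simp
  rw [hconj, LinearEquiv.conj_apply, LinearMap.ker_comp, LinearEquiv.ker_comp,
    Submodule.comap_equiv_eq_map_symm, LinearEquiv.finrank_map_eq]

theorem SimpleGraph.isHermitian_adjMatR {V : Type*} [Fintype V] (G : SimpleGraph V) :
    G.adjMatR.IsHermitian := by
  ext i j
  simp [adjMatR, G.adj_comm]

namespace SimpleGraph

variable {V B : Type*} [Fintype V] [DecidableEq V]

theorem adjMatR_add_one_mulVec_apply (G : SimpleGraph V) (x : V → ℝ) (u : V) :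
    ((G.adjMatR + 1) *ᵥ x) u = ∑ w with u = w ∨ G.Adj u w, x w := by
  rw [Finset.sum_filter]
  refine Finset.sum_congr rfl fun w _ => ?_
  by_cases huw : u = w
  · subst huw; simp [adjMatR]
  · simp [adjMatR, one_apply, huw]

theorem adjMatR_mulVec_single_sub_single (G : SimpleGraph V) {p q : V} (hpq : G.Adj p q)
    (htwin : ∀ u, u ≠ p → u ≠ q → (G.Adj u p ↔ G.Adj u q)) :
    G.adjMatR *ᵥ (Pi.single p 1 - Pi.single q 1) = -(Pi.single p 1 - Pi.single q 1) := by
  funext u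
  have hne := G.ne_of_adj hpq
  simp only [mulVec_sub, mulVec_single_one, Pi.sub_apply, Pi.neg_apply, col_apply, adjMatR,
    of_apply]
  by_cases hup : u = p
  · subst hup; simp [hpq, hne]
  by_cases huq : u = q
  · subst huq; simp [hpq.symm, Ne.symm hne]
  simp only [Pi.single_eq_of_ne hup, Pi.single_eq_of_ne huq, neg_zero, htwin u hup huq, sub_self]

/-- `G` consists of the cliques `{c} ∪ β⁻¹ {b}`, `b : B`, glued at the common vertex `c`. -/
def IsWindmill (G : SimpleGraph V) (c : V) (β : V → B) : Prop :=
  ∀ u w, G.Adj u w ↔ u ≠ w ∧ (u = c ∨ w = c ∨ β u = β w)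

noncomputable def windmillReadout [Fintype B] (c : V) (β : V → B) :
    (V → ℝ) →ₗ[ℝ] ℝ × (B → ℝ) :=
  (LinearMap.proj c).prod (LinearMap.pi fun b => ∑ w with w = c ∨ β w = b, LinearMap.proj w)

theorem windmillReadout_apply [Fintype B] (c : V) (β : V → B) (x : V → ℝ) :
    windmillReadout c β x = (x c, fun b => ∑ w with w = c ∨ β w = b, x w) := by
  refine Prod.ext rfl (funext fun b => ?_)
  simp [windmillReadout, LinearMap.sum_apply]

theorem sum_eq_sum_closedBlockSum [Fintype B] (c : V) (β : V → B) (x : V → ℝ) :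
    ∑ w, x w = ∑ b, ∑ w with w = c ∨ β w = b, x w - (Fintype.card B - 1) * x c := by
  have hcount (w : V) : ∑ b : B, (if w = c ∨ β w = b then x w else 0)
      = x w + if w = c then (Fintype.card B - 1) * x w else 0 := by
    by_cases hw : w = c
    · simp [hw]; ring
    · simp [hw]
  simp_rw [Finset.sum_filter]
  rw [Finset.sum_comm]
  simp_rw [hcount, Finset.sum_add_distrib, Finset.sum_ite_eq', Finset.mem_univ, if_true]
  ring

theorem windmillReadout_surjective [Fintype B] {c : V} {β : V → B}
    (hblock : ∀ b, ∃ u, u ≠ c ∧ β u = b) : Function.Surjective (windmillReadout c β) := by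
  choose r hrc hrβ using hblock
  rintro ⟨a, t⟩
  let x (u : V) : ℝ := if u = c then a else if u = r (β u) then t (β u) - a else 0
  have hx (b : B) (w : V) (hw : w = c ∨ β w = b) :
      x w = (if w = c then a else 0) + if w = r b then t b - a else 0 := by
    rcases hw with rfl | rfl
    · simp [x, Ne.symm (hrc _)]
    · by_cases hw : w = c <;> simp [x, hw, Ne.symm (hrc _)]
  refine ⟨x, ?_⟩
  rw [windmillReadout_apply]
  refine Prod.ext (by simp [x]) (funext fun b => ?_)
  dsimp only
  rw [Finset.sum_congr rfl fun w hw => hx b w (Finset.mem_filter.mp hw).2, Finset.sum_add_distrib,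
    Finset.sum_ite_eq', Finset.sum_ite_eq']
  simp [hrβ]

namespace IsWindmill

variable {G : SimpleGraph V} {c : V} {β : V → B}

theorem mulVec_single_sub_single (hG : G.IsWindmill c β) {p q : V} (hpq : p ≠ q) (hp : p ≠ c)
    (hq : q ≠ c) (hβ : β p = β q) :
    G.adjMatR *ᵥ (Pi.single p 1 - Pi.single q 1) = -(Pi.single p 1 - Pi.single q 1) :=
  G.adjMatR_mulVec_single_sub_single ((hG p q).2 ⟨hpq, .inr (.inr hβ)⟩) fun u hup huq => by
    rw [hG u p, hG u q, hβ]
    simp [hup, huq, hp, hq]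

theorem adjMatR_add_one_mulVec_apply (hG : G.IsWindmill c β) (x : V → ℝ) (u : V) :
    ((G.adjMatR + 1) *ᵥ x) u =
      if u = c then ∑ w, x w else ∑ w with w = c ∨ β w = β u, x w := by
  rw [G.adjMatR_add_one_mulVec_apply]
  split_ifs <;>
  · congr 1
    ext w
    simp only [mem_filter, mem_univ, true_and, hG u w]
    tauto

theorem ker_adjMatR_add_one [Fintype B] (hG : G.IsWindmill c β)
    (hblock : ∀ b, ∃ u, u ≠ c ∧ β u = b) (hB : 1 < Fintype.card B) :
    LinearMap.ker (G.adjMatR + 1).mulVecLin = LinearMap.ker (windmillReadout c β) := by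
  ext x
  simp only [LinearMap.mem_ker, mulVecLin_apply, windmillReadout_apply, Prod.mk_eq_zero,
    funext_iff, Pi.zero_apply, hG.adjMatR_add_one_mulVec_apply]
  constructor
  · intro h
    have hblocks (b : B) : ∑ w with w = c ∨ β w = b, x w = 0 := by
      obtain ⟨u, huc, rfl⟩ := hblock b
      simpa [huc] using h u
    have hsum := h c
    rw [if_pos rfl, sum_eq_sum_closedBlockSum c β, Finset.sum_eq_zero fun b _ => hblocks b]
      at hsum
    have hB' : (Fintype.card B - 1 : ℝ) ≠ 0 := by
      have : (1 : ℝ) < Fintype.card B := by exact_mod_cast hB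
      linarith
    exact ⟨(mul_eq_zero.mp (by linarith)).resolve_left hB', hblocks⟩
  · rintro ⟨hc, hblocks⟩ u
    split_ifs
    · rw [sum_eq_sum_closedBlockSum c β, hc, Finset.sum_eq_zero fun b _ => hblocks b]
      ring
    · exact hblocks _

theorem finrank_ker_adjMatR_add_one [Fintype B] (hG : G.IsWindmill c β)
    (hblock : ∀ b, ∃ u, u ≠ c ∧ β u = b) (hB : 1 < Fintype.card B) :
    finrank ℝ (LinearMap.ker (G.adjMatR + 1).mulVecLin) =
      Fintype.card V - Fintype.card B - 1 := by
  have h := (windmillReadout c β).finrank_range_add_finrank_ker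
  rw [LinearMap.range_eq_top.mpr (windmillReadout_surjective hblock), finrank_top,
    finrank_prod, finrank_self, finrank_fintype_fun_eq_card, finrank_fintype_fun_eq_card] at h
  rw [hG.ker_adjMatR_add_one hblock hB]
  omega

end IsWindmill

end SimpleGraph

-- Truncated subtraction puts the vertices `0, …, 2k-n+1` into block `0`; the pair
-- `2k-n+2t, 2k-n+1+2t` goes into block `t`.
theorem calG_isWindmill {n k : ℕ} {c : Fin n} (hc : c.val = 0) {β : Fin n → Fin (n - k)}
    (hβ : ∀ j, (β j : ℕ) = (j - (2 * k - n + 1) + 1) / 2) : (calG n k).IsWindmill c β := by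
  intro i j
  rw [calG, SimpleGraph.fromRel_adj]
  simp only [ne_eq, Fin.ext_iff, hc, hβ]
  omega

theorem calG_block_nonempty {n k : ℕ} (hk1 : n / 2 + 1 ≤ k) {c : Fin n} (hc : c.val = 0)
    {β : Fin n → Fin (n - k)}
    (hβ : ∀ j, (β j : ℕ) = (j - (2 * k - n + 1) + 1) / 2) (b : Fin (n - k)) :
    ∃ u, u ≠ c ∧ β u = b := by
  have hb := b.isLt
  have hu : (if b.val = 0 then 1 else 2 * k - n + 2 * b.val) < n := by split_ifs <;> omega
  obtain ⟨u, hu⟩ : ∃ u : Fin n, u.val = if b.val = 0 then 1 else 2 * k - n + 2 * b.val :=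
    ⟨⟨_, hu⟩, rfl⟩
  refine ⟨u, Fin.ne_of_val_ne ?_, Fin.ext ?_⟩
  · rw [hu, hc]
    split_ifs <;> omega
  · rw [hβ, hu]
    split_ifs <;> omega

/-- For `⌊n/2⌋ + 1 ≤ k ≤ n − 2`, each of the `k − 1` vectors
in `E₁ = {e(v₁) − e(v_j) : 2 ≤ j ≤ 2k−n+1} ∪ {e(u₁⁽ⁱ⁾) − e(u₂⁽ⁱ⁾) : 1 ≤ i ≤ n−k−1}`
satisfies `A x = −x` for `A = A(𝒢(n,k))` (here `v₁` is the vertex `1`,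
`v_j` the vertex `j`, and `u₁⁽ⁱ⁾, u₂⁽ⁱ⁾` the vertices `2k−n+2i, 2k−n+1+2i`);
consequently `−1` is an eigenvalue of `A(𝒢(n,k))` of multiplicity exactly
`k − 1`. -/
theorem eigenvectors_neg_one_calG (n k : ℕ) (hk1 : n / 2 + 1 ≤ k) (hk2 : k ≤ n - 2) :
    (∀ i j : Fin n, i.val = 1 → 2 ≤ j.val → j.val ≤ 2 * k - n + 1 →
      (calG n k).adjMatR.mulVec (Pi.single i (1 : ℝ) - Pi.single j 1) =
        -(Pi.single i (1 : ℝ) - Pi.single j 1)) ∧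
    (∀ p q : Fin n,
      (∃ t : ℕ, 1 ≤ t ∧ t ≤ n - k - 1 ∧
        p.val = 2 * k - n + 2 * t ∧ q.val = 2 * k - n + 1 + 2 * t) →
      (calG n k).adjMatR.mulVec (Pi.single p (1 : ℝ) - Pi.single q 1) =
        -(Pi.single p (1 : ℝ) - Pi.single q 1)) ∧
    (calG n k).adjMatR.charpoly.rootMultiplicity (-1) = k - 1 := by
  obtain ⟨c, hc⟩ : ∃ c : Fin n, c.val = 0 := ⟨⟨0, by omega⟩, rfl⟩
  obtain ⟨β, hβ⟩ :
      ∃ β : Fin n → Fin (n - k), ∀ j, (β j : ℕ) = (j - (2 * k - n + 1) + 1) / 2 :=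
    ⟨fun j => ⟨(j - (2 * k - n + 1) + 1) / 2, by omega⟩, fun _ => rfl⟩
  have hG := calG_isWindmill hc hβ
  refine ⟨fun i j hi hj₁ hj₂ => ?_, fun p q ⟨t, ht₁, ht₂, hp, hq⟩ => ?_, ?_⟩
  · exact hG.mulVec_single_sub_single (Fin.ne_of_val_ne (by omega)) (Fin.ne_of_val_ne (by omega))
      (Fin.ne_of_val_ne (by omega)) (Fin.ext (by rw [hβ, hβ]; omega))
  · exact hG.mulVec_single_sub_single (Fin.ne_of_val_ne (by omega)) (Fin.ne_of_val_ne (by omega))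
      (Fin.ne_of_val_ne (by omega)) (Fin.ext (by rw [hβ, hβ]; omega))
  · rw [(calG n k).isHermitian_adjMatR.rootMultiplicity_charpoly_eq_finrank_ker, neg_smul,
      one_smul, sub_neg_eq_add, hG.finrank_ker_adjMatR_add_one
        (calG_block_nonempty hk1 hc hβ) (by rw [Fintype.card_fin]; omega),
      Fintype.card_fin, Fintype.card_fin]
    omega
end

section
/- Let n, k be integers with ⌊n/2⌋ + 1 ≤ k ≤ (1/2)(n − 1 + √(n − 1)), and set a = 2k − n + 1. Then ρ(𝒢(n,k)) < a + [n − a(a+1) + √((a² + a − n)² + 8ak(n − 1 − a))] / (4a). -/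
open Classical

section AuxSpecRad
open Finset

lemma calG_adj (n k : ℕ) (i j : Fin n) :
    (calG n k).Adj i j ↔ i ≠ j ∧
      ((i.val = 0 ∨ j.val = 0) ∨
       (i.val ≤ 2*k - n + 1 ∧ j.val ≤ 2*k - n + 1) ∨
       (2*k - n + 1 < i.val ∧ 2*k - n + 1 < j.val ∧
         (i.val - (2*k - n + 2))/2 = (j.val - (2*k - n + 2))/2)) := by
  rw [calG, SimpleGraph.fromRel_adj]
  constructor <;> rintro ⟨hne, h⟩ <;> exact ⟨hne, by omega⟩

section helpers

lemma adjMatR_apply {V : Type*} [Fintype V] (G : SimpleGraph V) (i j : V) :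
    G.adjMatR i j = if G.Adj i j then (1 : ℝ) else 0 := rfl

lemma adjMatR_nonneg {V : Type*} [Fintype V] (G : SimpleGraph V) (i j : V) :
    0 ≤ G.adjMatR i j := by
  rw [adjMatR_apply]; split <;> norm_num

lemma adjMatR_le_one {V : Type*} [Fintype V] (G : SimpleGraph V) (i j : V) :
    G.adjMatR i j ≤ 1 := by
  rw [adjMatR_apply]; split <;> norm_num

lemma adjMatR_eq_zero {V : Type*} [Fintype V] (G : SimpleGraph V) {i j : V}
    (h : ¬ G.Adj i j) : G.adjMatR i j = 0 := by
  rw [adjMatR_apply, if_neg h]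

/-- sum of an indicator over `Fin n` as a filter card. -/
lemma sum_ite_val (n : ℕ) (P : ℕ → Prop) [DecidablePred P] (c : ℝ) :
    ∑ j : Fin n, (if P j.val then c else 0)
      = (((Finset.range n).filter P).card : ℝ) * c := by
  rw [Fin.sum_univ_eq_sum_range (fun v => if P v then c else 0) n]
  rw [Finset.sum_ite, Finset.sum_const, Finset.sum_const_zero, add_zero, nsmul_eq_mul]

end helpers

lemma deg_bound (n k : ℕ) (h2k : n + 1 ≤ 2*k) (hbn : 2*k - n + 1 ≤ n - 1) (hn : 5 ≤ n)
    (m : Fin n) :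
    ∑ j, (calG n k).adjMatR m j ≤
      (if m.val = 0 then (n:ℝ) - 1 else
        if m.val ≤ 2*k - n + 1 then ((2*k - n + 1 : ℕ) : ℝ) else 2) := by
  have hmlt := m.isLt
  by_cases hm0 : m.val = 0
  · rw [if_pos hm0]
    calc ∑ j, (calG n k).adjMatR m j
        ≤ ∑ j : Fin n, (if ¬ j.val = 0 then (1:ℝ) else 0) := by
          apply Finset.sum_le_sum
          intro j _
          rw [adjMatR_apply]
          by_cases hadj : (calG n k).Adj m j
          · rw [if_pos hadj]
            rw [calG_adj] at hadj
            obtain ⟨hne, -⟩ := hadj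
            have hj0 : ¬ j.val = 0 := by
              intro h; exact hne (Fin.ext (by omega))
            rw [if_pos hj0]
          · rw [if_neg hadj]; split <;> norm_num
      _ = (((Finset.range n).filter (fun v => ¬ v = 0)).card : ℝ) * 1 :=
          sum_ite_val n (fun v => ¬ v = 0) 1
      _ ≤ (n:ℝ) - 1 := by
          have he : (Finset.range n).filter (fun v => ¬ v = 0) = Finset.Ico 1 n := by
            ext v; simp [Finset.mem_filter, Finset.mem_range, Finset.mem_Ico]; omega
          rw [he, Nat.card_Ico, mul_one]
          have h1n : (1:ℕ) ≤ n := by omega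
          push_cast [Nat.cast_sub h1n]
          norm_num
  · by_cases hmb : m.val ≤ 2*k - n + 1
    · rw [if_neg hm0, if_pos hmb]
      calc ∑ j, (calG n k).adjMatR m j
          ≤ ∑ j : Fin n, (if j.val ≤ 2*k - n + 1 ∧ ¬ j.val = m.val then (1:ℝ) else 0) := by
            apply Finset.sum_le_sum
            intro j _
            rw [adjMatR_apply]
            by_cases hadj : (calG n k).Adj m j
            · rw [if_pos hadj]
              rw [calG_adj] at hadj
              obtain ⟨hne, hc⟩ := hadj
              have hvne : ¬ j.val = m.val := by
                intro h; exact hne (Fin.ext (by omega))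
              have hjb : j.val ≤ 2*k - n + 1 := by omega
              rw [if_pos ⟨hjb, hvne⟩]
            · rw [if_neg hadj]; split <;> norm_num
        _ = (((Finset.range n).filter
              (fun v => v ≤ 2*k - n + 1 ∧ ¬ v = m.val)).card : ℝ) * 1 :=
            sum_ite_val n (fun v => v ≤ 2*k - n + 1 ∧ ¬ v = m.val) 1
        _ ≤ ((2*k - n + 1 : ℕ) : ℝ) := by
            have he : (Finset.range n).filter (fun v => v ≤ 2*k - n + 1 ∧ ¬ v = m.val)
                = (Finset.range (2*k - n + 2)).erase m.val := by
              ext v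
              simp only [Finset.mem_filter, Finset.mem_range, Finset.mem_erase]
              omega
            rw [he, Finset.card_erase_of_mem (by simp only [Finset.mem_range]; omega),
              Finset.card_range, mul_one]
            have h21 : 2*k - n + 2 - 1 = 2*k - n + 1 := by omega
            rw [h21]
    · rw [if_neg hm0, if_neg hmb]
      calc ∑ j, (calG n k).adjMatR m j
          ≤ ∑ j : Fin n, ((if j.val = 0 then (1:ℝ) else 0) +
              (if 2*k - n + 1 < j.val ∧ ¬ j.val = m.val ∧
                  (j.val - (2*k - n + 2))/2 = (m.val - (2*k - n + 2))/2
                then (1:ℝ) else 0)) := by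
            apply Finset.sum_le_sum
            intro j _
            rw [adjMatR_apply]
            by_cases hadj : (calG n k).Adj m j
            · rw [if_pos hadj]
              rw [calG_adj] at hadj
              obtain ⟨hne, hc⟩ := hadj
              have hvne : ¬ j.val = m.val := by
                intro h; exact hne (Fin.ext (by omega))
              by_cases hj0 : j.val = 0
              · rw [if_pos hj0]
                split_ifs <;> norm_num
              · rw [if_neg hj0]
                have hq : 2*k - n + 1 < j.val ∧ ¬ j.val = m.val ∧
                    (j.val - (2*k - n + 2))/2 = (m.val - (2*k - n + 2))/2 := by omega
                rw [if_pos hq]; norm_num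
            · rw [if_neg hadj]
              split_ifs <;> norm_num
        _ ≤ 2 := by
            rw [Finset.sum_add_distrib, sum_ite_val n (fun v => v = 0) 1,
              sum_ite_val n (fun v => 2*k - n + 1 < v ∧ ¬ v = m.val ∧
                (v - (2*k - n + 2))/2 = (m.val - (2*k - n + 2))/2) 1]
            have he1 : (Finset.range n).filter (fun v => v = 0) = {0} := by
              ext v; simp only [Finset.mem_filter, Finset.mem_range, Finset.mem_singleton]
              omega
            have hc2 : (((Finset.range n).filter (fun v => 2*k - n + 1 < v ∧ ¬ v = m.val ∧
                (v - (2*k - n + 2))/2 = (m.val - (2*k - n + 2))/2)).card : ℝ) ≤ 1 := by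
              have : ((Finset.range n).filter (fun v => 2*k - n + 1 < v ∧ ¬ v = m.val ∧
                  (v - (2*k - n + 2))/2 = (m.val - (2*k - n + 2))/2)).card ≤ 1 := by
                apply Finset.card_le_one.2
                intro x hx y hy
                simp only [Finset.mem_filter, Finset.mem_range] at hx hy
                omega
              exact_mod_cast this
            rw [he1]
            simp only [Finset.card_singleton]
            nlinarith [hc2]

set_option maxHeartbeats 1000000 in
lemma sumsum_bound (n k : ℕ) (h2k : n + 1 ≤ 2*k) (hbn : 2*k - n + 1 ≤ n - 1) (hn : 5 ≤ n)
    (i : Fin n) :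
    ∑ m, (calG n k).adjMatR i m * (∑ j, (calG n k).adjMatR m j)
      ≤ ((2*k - n + 1 : ℕ) : ℝ)^2 + 2*((n:ℝ) - 1 - ((2*k - n + 1 : ℕ) : ℝ)) := by
  have hB2 : 2 ≤ 2*k - n + 1 := by omega
  have hBn : ((2*k - n + 1 : ℕ) : ℝ) ≤ (n:ℝ) - 1 := by
    have h1n : (1:ℕ) ≤ n := by omega
    have := hbn
    have : ((2*k - n + 1 : ℕ) : ℝ) ≤ ((n - 1 : ℕ) : ℝ) := by exact_mod_cast this
    rwa [Nat.cast_sub h1n, Nat.cast_one] at this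
  have hn5 : (5:ℝ) ≤ (n:ℝ) := by exact_mod_cast hn
  have hB2R : (2:ℝ) ≤ ((2*k - n + 1 : ℕ) : ℝ) := by exact_mod_cast hB2
  have step1 : ∑ m, (calG n k).adjMatR i m * (∑ j, (calG n k).adjMatR m j)
      ≤ ∑ m : Fin n, (calG n k).adjMatR i m *
        (if m.val = 0 then (n:ℝ) - 1 else
          if m.val ≤ 2*k - n + 1 then ((2*k - n + 1 : ℕ) : ℝ) else 2) := by
    apply Finset.sum_le_sum
    intro m _
    exact mul_le_mul_of_nonneg_left (deg_bound n k h2k hbn hn m) (adjMatR_nonneg _ _ _)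
  refine le_trans step1 ?_
  have hdRnn : ∀ m : Fin n, (0:ℝ) ≤ (if m.val = 0 then (n:ℝ) - 1 else
      if m.val ≤ 2*k - n + 1 then ((2*k - n + 1 : ℕ) : ℝ) else 2) := by
    intro m; split_ifs <;> [linarith; positivity; norm_num]
  by_cases hi0 : i.val = 0
  · -- center vertex
    calc ∑ m : Fin n, (calG n k).adjMatR i m *
        (if m.val = 0 then (n:ℝ) - 1 else
          if m.val ≤ 2*k - n + 1 then ((2*k - n + 1 : ℕ) : ℝ) else 2)
        ≤ ∑ m : Fin n, ((if 1 ≤ m.val ∧ m.val ≤ 2*k - n + 1 then ((2*k - n + 1 : ℕ) : ℝ) else 0)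
            + (if 2*k - n + 1 < m.val then (2:ℝ) else 0)) := by
          apply Finset.sum_le_sum
          intro m _
          by_cases hm0 : m.val = 0
          · have him : i = m := Fin.ext (by omega)
            have : ¬ (calG n k).Adj i m := by rw [him]; exact (calG n k).irrefl
            rw [adjMatR_eq_zero _ this, zero_mul]
            split_ifs <;> positivity
          · by_cases hmb : m.val ≤ 2*k - n + 1
            · rw [if_neg hm0, if_pos hmb, if_pos (by omega : 1 ≤ m.val ∧ m.val ≤ 2*k - n + 1),
                if_neg (by omega : ¬ 2*k - n + 1 < m.val), add_zero]
              exact mul_le_of_le_one_left (by positivity) (adjMatR_le_one _ _ _)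
            · rw [if_neg hm0, if_neg hmb, if_neg (by omega : ¬ (1 ≤ m.val ∧ m.val ≤ 2*k - n + 1)),
                if_pos (by omega : 2*k - n + 1 < m.val), zero_add]
              exact mul_le_of_le_one_left (by norm_num) (adjMatR_le_one _ _ _)
      _ ≤ ((2*k - n + 1 : ℕ) : ℝ)^2 + 2*((n:ℝ) - 1 - ((2*k - n + 1 : ℕ) : ℝ)) := by
          rw [Finset.sum_add_distrib,
            sum_ite_val n (fun v => 1 ≤ v ∧ v ≤ 2*k - n + 1) ((2*k - n + 1 : ℕ) : ℝ),
            sum_ite_val n (fun v => 2*k - n + 1 < v) 2]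
          have he1 : (Finset.range n).filter (fun v => 1 ≤ v ∧ v ≤ 2*k - n + 1)
              = Finset.Icc 1 (2*k - n + 1) := by
            ext v; simp only [Finset.mem_filter, Finset.mem_range, Finset.mem_Icc]; omega
          have he2 : (Finset.range n).filter (fun v => 2*k - n + 1 < v)
              = Finset.Ico (2*k - n + 2) n := by
            ext v; simp only [Finset.mem_filter, Finset.mem_range, Finset.mem_Ico]; omega
          rw [he1, he2, Nat.card_Icc, Nat.card_Ico]
          have e1 : 2*k - n + 1 + 1 - 1 = 2*k - n + 1 := by omega
          rw [e1]
          have e2 : ((n - (2*k - n + 2) : ℕ) : ℝ) = (n:ℝ) - ((2*k - n + 1 : ℕ) : ℝ) - 1 := by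
            have hle : 2*k - n + 2 ≤ n := by omega
            rw [Nat.cast_sub hle]
            push_cast [Nat.cast_sub (by omega : n ≤ 2*k)]
            ring
          rw [e2]
          ring_nf
          nlinarith [hBn, hB2R]
  · by_cases hib : i.val ≤ 2*k - n + 1
    · -- clique vertex
      calc ∑ m : Fin n, (calG n k).adjMatR i m *
          (if m.val = 0 then (n:ℝ) - 1 else
            if m.val ≤ 2*k - n + 1 then ((2*k - n + 1 : ℕ) : ℝ) else 2)
          ≤ ∑ m : Fin n, ((if m.val = 0 then (n:ℝ) - 1 else 0)
              + (if 1 ≤ m.val ∧ m.val ≤ 2*k - n + 1 ∧ ¬ m.val = i.val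
                  then ((2*k - n + 1 : ℕ) : ℝ) else 0)) := by
            apply Finset.sum_le_sum
            intro m _
            by_cases hadj : (calG n k).Adj i m
            · have hadj' := hadj
              rw [calG_adj] at hadj'
              obtain ⟨hne, hc⟩ := hadj'
              have hvne : ¬ m.val = i.val := by
                intro h; exact hne (Fin.ext (by omega))
              by_cases hm0 : m.val = 0
              · rw [if_pos hm0, if_pos hm0, if_neg (by omega), add_zero]
                exact mul_le_of_le_one_left (by linarith) (adjMatR_le_one _ _ _)
              · have hmb : m.val ≤ 2*k - n + 1 := by omega
                rw [if_neg hm0, if_pos hmb, if_neg hm0,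
                  if_pos (by omega : 1 ≤ m.val ∧ m.val ≤ 2*k - n + 1 ∧ ¬ m.val = i.val),
                  zero_add]
                exact mul_le_of_le_one_left (by positivity) (adjMatR_le_one _ _ _)
            · rw [adjMatR_eq_zero _ hadj, zero_mul]
              have h1 : (0:ℝ) ≤ (if m.val = 0 then (n:ℝ) - 1 else 0) := by
                split_ifs <;> [linarith; norm_num]
              have h2 : (0:ℝ) ≤ (if 1 ≤ m.val ∧ m.val ≤ 2*k - n + 1 ∧ ¬ m.val = i.val
                  then ((2*k - n + 1 : ℕ) : ℝ) else 0) := by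
                split_ifs <;> [positivity; norm_num]
              linarith
        _ ≤ ((2*k - n + 1 : ℕ) : ℝ)^2 + 2*((n:ℝ) - 1 - ((2*k - n + 1 : ℕ) : ℝ)) := by
            rw [Finset.sum_add_distrib,
              sum_ite_val n (fun v => v = 0) ((n:ℝ) - 1),
              sum_ite_val n (fun v => 1 ≤ v ∧ v ≤ 2*k - n + 1 ∧ ¬ v = i.val)
                ((2*k - n + 1 : ℕ) : ℝ)]
            have he1 : (Finset.range n).filter (fun v => v = 0) = {0} := by
              ext v; simp only [Finset.mem_filter, Finset.mem_range, Finset.mem_singleton]; omega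
            have he2 : (Finset.range n).filter (fun v => 1 ≤ v ∧ v ≤ 2*k - n + 1 ∧ ¬ v = i.val)
                = (Finset.Icc 1 (2*k - n + 1)).erase i.val := by
              ext v
              simp only [Finset.mem_filter, Finset.mem_range, Finset.mem_erase, Finset.mem_Icc]
              omega
            rw [he1, he2, Finset.card_erase_of_mem (by simp only [Finset.mem_Icc]; omega),
              Nat.card_Icc, Finset.card_singleton]
            have e1 : 2*k - n + 1 + 1 - 1 - 1 = 2*k - n + 1 - 1 := by omega
            rw [e1]
            have e3 : ((2*k - n + 1 - 1 : ℕ) : ℝ) = ((2*k - n + 1 : ℕ) : ℝ) - 1 := by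
              rw [Nat.cast_sub (by omega : 1 ≤ 2*k - n + 1), Nat.cast_one]
            rw [e3]
            have hBn' := hBn
            have hB2R' := hB2R
            push_cast at hBn' hB2R' ⊢
            nlinarith [hBn', hB2R']
    · -- triangle vertex
      calc ∑ m : Fin n, (calG n k).adjMatR i m *
          (if m.val = 0 then (n:ℝ) - 1 else
            if m.val ≤ 2*k - n + 1 then ((2*k - n + 1 : ℕ) : ℝ) else 2)
          ≤ ∑ m : Fin n, ((if m.val = 0 then (n:ℝ) - 1 else 0)
              + (if 2*k - n + 1 < m.val ∧ ¬ m.val = i.val ∧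
                  (m.val - (2*k - n + 2))/2 = (i.val - (2*k - n + 2))/2
                  then (2:ℝ) else 0)) := by
            apply Finset.sum_le_sum
            intro m _
            by_cases hadj : (calG n k).Adj i m
            · have hadj' := hadj
              rw [calG_adj] at hadj'
              obtain ⟨hne, hc⟩ := hadj'
              have hvne : ¬ m.val = i.val := by
                intro h; exact hne (Fin.ext (by omega))
              by_cases hm0 : m.val = 0
              · rw [if_pos hm0, if_pos hm0, if_neg (by omega), add_zero]
                exact mul_le_of_le_one_left (by linarith) (adjMatR_le_one _ _ _)
              · have hmb : ¬ m.val ≤ 2*k - n + 1 := by omega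
                rw [if_neg hm0, if_neg hmb, if_neg hm0,
                  if_pos (by omega : 2*k - n + 1 < m.val ∧ ¬ m.val = i.val ∧
                    (m.val - (2*k - n + 2))/2 = (i.val - (2*k - n + 2))/2),
                  zero_add]
                exact mul_le_of_le_one_left (by norm_num) (adjMatR_le_one _ _ _)
            · rw [adjMatR_eq_zero _ hadj, zero_mul]
              have h1 : (0:ℝ) ≤ (if m.val = 0 then (n:ℝ) - 1 else 0) := by
                split_ifs <;> [linarith; norm_num]
              have h2 : (0:ℝ) ≤ (if 2*k - n + 1 < m.val ∧ ¬ m.val = i.val ∧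
                  (m.val - (2*k - n + 2))/2 = (i.val - (2*k - n + 2))/2
                  then (2:ℝ) else 0) := by
                split_ifs <;> norm_num
              linarith
        _ ≤ ((2*k - n + 1 : ℕ) : ℝ)^2 + 2*((n:ℝ) - 1 - ((2*k - n + 1 : ℕ) : ℝ)) := by
            rw [Finset.sum_add_distrib,
              sum_ite_val n (fun v => v = 0) ((n:ℝ) - 1),
              sum_ite_val n (fun v => 2*k - n + 1 < v ∧ ¬ v = i.val ∧
                (v - (2*k - n + 2))/2 = (i.val - (2*k - n + 2))/2) 2]
            have he1 : (Finset.range n).filter (fun v => v = 0) = {0} := by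
              ext v; simp only [Finset.mem_filter, Finset.mem_range, Finset.mem_singleton]; omega
            have hc2 : (((Finset.range n).filter (fun v => 2*k - n + 1 < v ∧ ¬ v = i.val ∧
                (v - (2*k - n + 2))/2 = (i.val - (2*k - n + 2))/2)).card : ℝ) ≤ 1 := by
              have : ((Finset.range n).filter (fun v => 2*k - n + 1 < v ∧ ¬ v = i.val ∧
                  (v - (2*k - n + 2))/2 = (i.val - (2*k - n + 2))/2)).card ≤ 1 := by
                apply Finset.card_le_one.2
                intro x hx y hy
                simp only [Finset.mem_filter, Finset.mem_range] at hx hy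
                omega
              exact_mod_cast this
            rw [he1]
            simp only [Finset.card_singleton]
            nlinarith [hc2, hBn, hB2R, hn5]

lemma eig_sq_le (n k : ℕ) (h2k : n + 1 ≤ 2*k) (hbn : 2*k - n + 1 ≤ n - 1) (hn : 5 ≤ n)
    (t : ℝ) (x : Fin n → ℝ) (hx : x ≠ 0)
    (hxe : (calG n k).adjMatR.mulVec x = t • x) :
    t^2 ≤ ((2*k - n + 1 : ℕ) : ℝ)^2 + 2*((n:ℝ) - 1 - ((2*k - n + 1 : ℕ) : ℝ)) := by
  set A := (calG n k).adjMatR with hA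
  have h2 : A.mulVec (A.mulVec x) = (t^2) • x := by
    rw [hxe, Matrix.mulVec_smul, hxe, smul_smul, ← sq]
  have hune : (Finset.univ : Finset (Fin n)).Nonempty := ⟨⟨0, by omega⟩, Finset.mem_univ _⟩
  obtain ⟨i, -, hi⟩ := Finset.exists_max_image Finset.univ (fun j => |x j|) hune
  have hxi : 0 < |x i| := by
    rcases (abs_nonneg (x i)).lt_or_eq with h | h
    · exact h
    · exfalso; apply hx; funext j
      have hj := hi j (Finset.mem_univ j)
      rw [← h] at hj
      have h0 : |x j| = 0 := le_antisymm hj (abs_nonneg _)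
      simpa [abs_eq_zero] using h0
  have inner : ∀ m, |A.mulVec x m| ≤ (∑ j, A m j) * |x i| := by
    intro m
    have hrep : A.mulVec x m = ∑ j, A m j * x j := by
      simp [Matrix.mulVec, dotProduct]
    rw [hrep]
    calc |∑ j, A m j * x j| ≤ ∑ j, |A m j * x j| := Finset.abs_sum_le_sum_abs _ _
      _ ≤ ∑ j, A m j * |x i| := by
          apply Finset.sum_le_sum
          intro j _
          rw [abs_mul, abs_of_nonneg (adjMatR_nonneg _ _ _)]
          exact mul_le_mul_of_nonneg_left (hi j (Finset.mem_univ j)) (adjMatR_nonneg _ _ _)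
      _ = (∑ j, A m j) * |x i| := (Finset.sum_mul _ _ _).symm
  have houter : t^2 * |x i| ≤ (∑ m, A i m * (∑ j, A m j)) * |x i| := by
    have hti : A.mulVec (A.mulVec x) i = t^2 * x i := by
      rw [h2]; simp
    calc t^2 * |x i| = |t^2 * x i| := by
          rw [abs_mul, abs_of_nonneg (sq_nonneg t)]
      _ = |A.mulVec (A.mulVec x) i| := by rw [hti]
      _ = |∑ m, A i m * (A.mulVec x) m| := by
          congr 1
      _ ≤ ∑ m, |A i m * (A.mulVec x) m| := Finset.abs_sum_le_sum_abs _ _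
      _ ≤ ∑ m, A i m * ((∑ j, A m j) * |x i|) := by
          apply Finset.sum_le_sum
          intro m _
          rw [abs_mul, abs_of_nonneg (adjMatR_nonneg _ _ _)]
          exact mul_le_mul_of_nonneg_left (inner m) (adjMatR_nonneg _ _ _)
      _ = (∑ m, A i m * (∑ j, A m j)) * |x i| := by
          rw [Finset.sum_mul]
          exact Finset.sum_congr rfl fun m _ => (mul_assoc _ _ _).symm
  have hM := sumsum_bound n k h2k hbn hn i
  have : t^2 * |x i| ≤ (((2*k - n + 1 : ℕ) : ℝ)^2 + 2*((n:ℝ) - 1 - ((2*k - n + 1 : ℕ) : ℝ))) * |x i| :=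
    le_trans houter (mul_le_mul_of_nonneg_right hM (abs_nonneg _))
  exact le_of_mul_le_mul_right this hxi

/-- Core polynomial certificate. -/
lemma hP_poly (b u : ℝ) (hb : 0 ≤ b) (hu : 0 ≤ u)
    (hR : 0 < 16*(b+2)^2*((b+2)^2 + 2*(((b+2)^2+1+u) - 1 - (b+2)))
        + (3*(b+2)^2 - (b+2) + ((b+2)^2+1+u))^2
        - (((b+2)^2+(b+2)-((b+2)^2+1+u))^2 + 4*(b+2)*((((b+2)^2+1+u)-1)^2 - (b+2)^2))) :
    (16*(b+2)^2*((b+2)^2 + 2*(((b+2)^2+1+u) - 1 - (b+2)))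
        + (3*(b+2)^2 - (b+2) + ((b+2)^2+1+u))^2
        - (((b+2)^2+(b+2)-((b+2)^2+1+u))^2 + 4*(b+2)*((((b+2)^2+1+u)-1)^2 - (b+2)^2)))^2
      < 64*(b+2)^2*(3*(b+2)^2 - (b+2) + ((b+2)^2+1+u))^2
          *((b+2)^2 + 2*(((b+2)^2+1+u) - 1 - (b+2))) := by
  have hQ : 0 ≤ 12*u^2 + 4*b*u^2 + 8*b^3*u + 4*b^5 := by
    have h1 : 0 ≤ 12*u^2 := by positivity
    have h2 : 0 ≤ 4*b*u^2 := by
      have := mul_nonneg hb (sq_nonneg u); nlinarith [this]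
    have h3 : 0 ≤ 8*b^3*u := by
      have := mul_nonneg (pow_nonneg hb 3) hu; nlinarith [this]
    have h4 : 0 ≤ 4*b^5 := by
      have := pow_nonneg hb 5; nlinarith [this]
    linarith
  have hRQ := mul_nonneg hR.le hQ
  nlinarith [hRQ,
      pow_nonneg hu 1,
      pow_nonneg hu 2,
      pow_nonneg hu 3,
      pow_nonneg hu 4,
      pow_nonneg hb 1,
      mul_nonneg (pow_nonneg hb 1) (pow_nonneg hu 1),
      mul_nonneg (pow_nonneg hb 1) (pow_nonneg hu 2),
      mul_nonneg (pow_nonneg hb 1) (pow_nonneg hu 3),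
      mul_nonneg (pow_nonneg hb 1) (pow_nonneg hu 4),
      pow_nonneg hb 2,
      mul_nonneg (pow_nonneg hb 2) (pow_nonneg hu 1),
      mul_nonneg (pow_nonneg hb 2) (pow_nonneg hu 2),
      mul_nonneg (pow_nonneg hb 2) (pow_nonneg hu 3),
      pow_nonneg hb 3,
      mul_nonneg (pow_nonneg hb 3) (pow_nonneg hu 1),
      mul_nonneg (pow_nonneg hb 3) (pow_nonneg hu 2),
      pow_nonneg hb 4,
      mul_nonneg (pow_nonneg hb 4) (pow_nonneg hu 1),
      mul_nonneg (pow_nonneg hb 4) (pow_nonneg hu 2),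
      pow_nonneg hb 5,
      mul_nonneg (pow_nonneg hb 5) (pow_nonneg hu 1),
      mul_nonneg (pow_nonneg hb 5) (pow_nonneg hu 2),
      pow_nonneg hb 6,
      mul_nonneg (pow_nonneg hb 6) (pow_nonneg hu 1),
      pow_nonneg hb 7,
      mul_nonneg (pow_nonneg hb 7) (pow_nonneg hu 1),
      pow_nonneg hb 8,
      pow_nonneg hb 9]

set_option maxHeartbeats 2000000 in
lemma partB (a n kr : ℝ) (ha2 : 2 ≤ a) (han : a^2 + 1 ≤ n) (hk : 2*kr = n + a - 1) :
    Real.sqrt (a^2 + 2*(n - 1 - a)) <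
      a + (n - a*(a+1) + Real.sqrt ((a^2 + a - n)^2 + 8*a*kr*(n - 1 - a))) / (4*a) := by
  have ha0 : 0 < a := by linarith
  have hMpos : 0 < a^2 + 2*(n - 1 - a) := by nlinarith
  have hDe : (a^2 + a - n)^2 + 8*a*kr*(n - 1 - a)
      = (a^2 + a - n)^2 + 4*a*((n-1)^2 - a^2) := by
    linear_combination (4*a*(n - 1 - a)) * hk
  rw [hDe]
  have hDpos : 0 < (a^2 + a - n)^2 + 4*a*((n-1)^2 - a^2) := by
    nlinarith [sq_nonneg (a^2 + a - n), sq_nonneg a, sq_nonneg (a-2)]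
  set s := Real.sqrt (a^2 + 2*(n - 1 - a)) with hs_def
  set d := Real.sqrt ((a^2 + a - n)^2 + 4*a*((n-1)^2 - a^2)) with hd_def
  have hs2 : s^2 = a^2 + 2*(n - 1 - a) := Real.sq_sqrt hMpos.le
  have hd2 : d^2 = (a^2 + a - n)^2 + 4*a*((n-1)^2 - a^2) := Real.sq_sqrt hDpos.le
  have hs0 : 0 < s := Real.sqrt_pos.2 hMpos
  have hd0 : 0 < d := Real.sqrt_pos.2 hDpos
  have hC : 0 < 3*a^2 - a + n := by nlinarith
  -- key: 4*a*s < (3*a^2 - a + n) + d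
  have key : 4*a*s < (3*a^2 - a + n) + d := by
    have hE2 : (4*a*s - (3*a^2 - a + n))^2
        < (a^2 + a - n)^2 + 4*a*((n-1)^2 - a^2) := by
      have hY : 0 < 8*a*(3*a^2 - a + n)*s := by positivity
      rcases le_or_gt (16*a^2*(a^2 + 2*(n - 1 - a)) + (3*a^2 - a + n)^2
          - ((a^2 + a - n)^2 + 4*a*((n-1)^2 - a^2))) 0 with hR | hR
      · nlinarith [hR, hY, hs2, sq_nonneg a, mul_pos ha0 hs0]
      · have hb : 0 ≤ a - 2 := by linarith
        have hu : 0 ≤ n - a^2 - 1 := by linarith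
        have hP := hP_poly (a - 2) (n - a^2 - 1) hb hu (by nlinarith [hR])
        have hP' : (16*a^2*(a^2 + 2*(n - 1 - a)) + (3*a^2 - a + n)^2
            - ((a^2 + a - n)^2 + 4*a*((n-1)^2 - a^2)))^2
            < 64*a^2*(3*a^2 - a + n)^2*(a^2 + 2*(n - 1 - a)) := by nlinarith [hP]
        have hY2 : (8*a*(3*a^2 - a + n)*s)^2
            = 64*a^2*(3*a^2 - a + n)^2*(a^2 + 2*(n - 1 - a)) := by
          calc (8*a*(3*a^2 - a + n)*s)^2 = 64*a^2*(3*a^2 - a + n)^2*s^2 := by ring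
            _ = 64*a^2*(3*a^2 - a + n)^2*(a^2 + 2*(n - 1 - a)) := by rw [hs2]
        have h8 : 16*a^2*(a^2 + 2*(n - 1 - a)) + (3*a^2 - a + n)^2
            - ((a^2 + a - n)^2 + 4*a*((n-1)^2 - a^2)) < 8*a*(3*a^2 - a + n)*s := by
          nlinarith [hP', hR, hY, hY2]
        nlinarith [h8, hs2]
    nlinarith [hE2, hd2, hd0, sq_nonneg (d - (4*a*s - (3*a^2 - a + n)))]
  have h4a : (0:ℝ) < 4*a := by linarith
  rw [show a + (n - a*(a+1) + d)/(4*a) = (4*a*a + (n - a*(a+1) + d))/(4*a) by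
    field_simp]
  rw [lt_div_iff₀ h4a]
  nlinarith [key]

end AuxSpecRad

/-- For `⌊n/2⌋ + 1 ≤ k ≤ (1/2)(n − 1 + √(n − 1))` and
`a = 2k − n + 1`, we have
`ρ(𝒢(n,k)) < a + [n − a(a+1) + √((a² + a − n)² + 8ak(n − 1 − a))]/(4a)`. -/
theorem specRad_calG_upper_bound_case1 (n k : ℕ) (hk1 : n / 2 + 1 ≤ k)
    (hk2 : (k : ℝ) ≤ ((n : ℝ) - 1 + Real.sqrt ((n : ℝ) - 1)) / 2)
    (a : ℝ) (ha : a = 2 * (k : ℝ) - n + 1) :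
    (calG n k).specRad <
      a + ((n : ℝ) - a * (a + 1) +
        Real.sqrt ((a ^ 2 + a - n) ^ 2 + 8 * a * k * ((n : ℝ) - 1 - a))) / (4 * a) := by
  have h2k : n + 1 ≤ 2*k := by omega
  have ha2 : (2:ℝ) ≤ a := by
    have hcast : ((n:ℝ) + 1) ≤ 2*(k:ℝ) := by exact_mod_cast h2k
    rw [ha]; linarith
  have hsq : a ≤ Real.sqrt ((n:ℝ) - 1) := by rw [ha]; linarith [hk2]
  have hn1 : (0:ℝ) ≤ (n:ℝ) - 1 := by
    by_contra h
    push_neg at h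
    rw [Real.sqrt_eq_zero'.2 (by linarith)] at hsq
    linarith
  have han' : a^2 ≤ (n:ℝ) - 1 := by
    have hp := pow_le_pow_left₀ (by linarith : (0:ℝ) ≤ a) hsq 2
    rwa [Real.sq_sqrt hn1] at hp
  have han : a^2 + 1 ≤ (n:ℝ) := by linarith
  have hn5R : (5:ℝ) ≤ (n:ℝ) := by nlinarith
  have hn5 : 5 ≤ n := by exact_mod_cast hn5R
  have hkr : 2*(k:ℝ) = (n:ℝ) + a - 1 := by rw [ha]; ring
  have hbnat : (((2*k - n + 1 : ℕ)):ℝ) = a := by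
    rw [ha]
    push_cast [Nat.cast_sub (by omega : n ≤ 2*k)]
    ring
  have hbn : 2*k - n + 1 ≤ n - 1 := by
    have hsle : Real.sqrt ((n:ℝ) - 1) ≤ (n:ℝ) - 1 := by
      have hs2 : Real.sqrt ((n:ℝ) - 1) ≤ Real.sqrt (((n:ℝ) - 1)^2) :=
        Real.sqrt_le_sqrt (by nlinarith)
      rwa [Real.sqrt_sq (by linarith)] at hs2
    have h1 : (((2*k - n + 1 : ℕ)):ℝ) ≤ (n:ℝ) - 1 := by rw [hbnat]; linarith
    have h2 : (((2*k - n + 1 : ℕ)):ℝ) ≤ ((n - 1 : ℕ):ℝ) := by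
      rw [Nat.cast_sub (by omega : 1 ≤ n)]; push_cast at h1 ⊢; linarith
    exact_mod_cast h2
  have hspec : (calG n k).specRad ≤ Real.sqrt (a^2 + 2*((n:ℝ) - 1 - a)) := by
    apply Real.sSup_le
    · rintro t ⟨x, hx, hxe⟩
      have ht2 := eig_sq_le n k h2k hbn hn5 t x hx hxe
      rw [hbnat] at ht2
      calc t ≤ |t| := le_abs_self t
        _ = Real.sqrt (t^2) := (Real.sqrt_sq_eq_abs t).symm
        _ ≤ _ := Real.sqrt_le_sqrt ht2
    · exact Real.sqrt_nonneg _
  exact lt_of_le_of_lt hspec (partB a (n:ℝ) (k:ℝ) ha2 han hkr)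
end

section
/- Let G be a clique tree containing a triangle block K₃ with two cut vertices u and v, where a block K_l (l ≥ 3) is attached to G at v as a pendant block with cut vertex v. Let x be a Perron vector of G with x_u ≥ x_v, and let G* be the graph obtained from G by moving the block K_l from v to u (deleting all edges from v to the other vertices of K_l and joining those vertices instead to u by a complete set of edges). Then ρ(G*) ≥ ρ(G). -/
open Classical

/-!
Moving the pendant block replaces the edges `vw` (`w ∈ L \ {v}`) by the edges `uw`. None of
the new edges is already in `G`: `u` is adjacent to `v ∈ L`, and a vertex outside a clique block
sees at most one vertex of it. Hence for the Perron vector `x`,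
`xᵀA(G*)x - xᵀA(G)x = 2 (x_u - x_v) ∑_{w ∈ L \ {v}} x_w ≥ 0`, and by the Rayleigh principle
`ρ(G) = xᵀA(G)x / xᵀx ≤ xᵀA(G*)x / xᵀx ≤ ρ(G*)`.
-/

open Matrix

theorem Matrix.mem_spectrum_iff_exists_mulVec_eq_smul {K n : Type*} [Field K] [Fintype n]
    [DecidableEq n] (A : Matrix n n K) (t : K) :
    t ∈ spectrum K A ↔ ∃ x : n → K, x ≠ 0 ∧ A *ᵥ x = t • x := by
  rw [← spectrum_toLin', ← Module.End.hasEigenvalue_iff_mem_spectrum]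
  constructor
  · intro h
    obtain ⟨x, hx⟩ := h.exists_hasEigenvector
    exact ⟨x, hx.2, by simpa using hx.apply_eq_smul⟩
  · rintro ⟨x, hx0, hx⟩
    exact Module.End.hasEigenvalue_of_hasEigenvector
      ⟨by simpa [Module.End.mem_eigenspace_iff] using hx, hx0⟩

open scoped MatrixOrder in
theorem Matrix.IsHermitian.dotProduct_mulVec_le {n : Type*} [Fintype n] [DecidableEq n]
    {A : Matrix n n ℝ} (hA : A.IsHermitian) {r : ℝ} (hr : ∀ t ∈ spectrum ℝ A, t ≤ r)
    (x : n → ℝ) : x ⬝ᵥ A *ᵥ x ≤ r * (x ⬝ᵥ x) := by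
  have h : A ≤ algebraMap ℝ (Matrix n n ℝ) r := le_algebraMap_of_spectrum_le hr hA
  simpa [Algebra.algebraMap_eq_smul_one, sub_mulVec, dotProduct_sub, smul_mulVec,
    dotProduct_smul] using (Matrix.le_iff.1 h).dotProduct_mulVec_nonneg x

namespace SimpleGraph

variable {V : Type*}

theorem IsClique.induce_connected_s17 {G : SimpleGraph V} {S : Set V} (hS : G.IsClique S)
    (hne : S.Nonempty) : (G.induce S).Connected := by
  obtain ⟨q, hq⟩ := hne
  refine (connected_iff _).2 ⟨fun a b => ?_, ⟨⟨q, hq⟩⟩⟩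
  by_cases hab : a = b
  · rw [hab]
  · exact Adj.reachable (hS a.2 b.2 (Subtype.coe_ne_coe.2 hab))

theorem connected_induce_insert_of_isClique {G : SimpleGraph V} {S : Set V} (hS : G.IsClique S)
    {p q : V} (hq : q ∈ S) (hpq : G.Adj p q) : (G.induce (insert p S)).Connected := by
  rw [Set.insert_eq]
  exact connected_induce_union
    ((isClique_singleton p).induce_connected_s17 (Set.singleton_nonempty p)).preconnected
    (hS.induce_connected_s17 ⟨q, hq⟩).preconnected rfl hq hpq

theorem IsBlock.eq_of_adj_of_adj {G : SimpleGraph V} {L : Set V} (hL : G.IsBlock L)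
    (hLc : G.IsClique L) {u v w : V} (hu : u ∉ L) (hv : v ∈ L) (hw : w ∈ L)
    (huv : G.Adj u v) (huw : G.Adj u w) : v = w := by
  by_contra hvw
  have hdel : ∀ z ∈ L, ∃ y ∈ L \ {z}, G.Adj u y := fun z _ => by
    by_cases hz : v = z
    · exact ⟨w, ⟨hw, fun h => hvw (hz.trans h.symm)⟩, huw⟩
    · exact ⟨v, ⟨hv, hz⟩, huv⟩
  -- `insert u L` would then contradict the maximality of the block `L`.
  have hins : G.IsConnectedNoCutVertexSet (insert u L) := by
    refine ⟨connected_induce_insert_of_isClique hLc hv huv, fun z hz => Or.inr ?_⟩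
    rcases hz with rfl | hz
    · rw [Set.insert_sdiff_self_of_notMem hu]
      exact hLc.induce_connected_s17 ⟨v, hv⟩
    · obtain ⟨y, hy, huy⟩ := hdel z hz
      rw [Set.insert_sdiff_of_notMem _ (by rintro rfl; exact hu hz)]
      exact connected_induce_insert_of_isClique (hLc.subset Set.sdiff_subset) hy huy
  exact hu ((hL.2 _ (Set.subset_insert u L) hins).symm ▸ Set.mem_insert u L)

def starOn (c : V) (W : Set V) : SimpleGraph V := fromEdgeSet {e | ∃ w ∈ W, e = s(c, w)}

theorem starOn_adj {c i j : V} {W : Set V} :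
    (starOn c W).Adj i j ↔ (i = c ∧ j ∈ W ∨ j = c ∧ i ∈ W) ∧ i ≠ j := by
  simp only [starOn, fromEdgeSet_adj, Set.mem_ofPred_eq, Sym2.eq_iff]
  constructor
  · rintro ⟨⟨w, hw, ⟨rfl, rfl⟩ | ⟨rfl, rfl⟩⟩, hij⟩
    exacts [⟨Or.inl ⟨rfl, hw⟩, hij⟩, ⟨Or.inr ⟨rfl, hw⟩, hij⟩]
  · rintro ⟨⟨rfl, hj⟩ | ⟨rfl, hi⟩, hij⟩
    exacts [⟨⟨j, hj, Or.inl ⟨rfl, rfl⟩⟩, hij⟩, ⟨⟨i, hi, Or.inr ⟨rfl, rfl⟩⟩, hij⟩]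

section AdjMatR

variable [Fintype V]

theorem adjMatR_eq_adjMatrix (G : SimpleGraph V) : G.adjMatR = G.adjMatrix ℝ := rfl

theorem isHermitian_adjMatR_s17 (G : SimpleGraph V) : G.adjMatR.IsHermitian :=
  isHermitian_iff_isSymm.2 (G.isSymm_adjMatrix (α := ℝ))

theorem specRad_eq_sSup_spectrum (G : SimpleGraph V) :
    G.specRad = sSup (spectrum ℝ G.adjMatR) :=
  congrArg sSup (Set.ext fun t => (G.adjMatR.mem_spectrum_iff_exists_mulVec_eq_smul t).symm)

theorem dotProduct_adjMatR_mulVec_le_specRad (G : SimpleGraph V) (x : V → ℝ) :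
    x ⬝ᵥ G.adjMatR *ᵥ x ≤ G.specRad * (x ⬝ᵥ x) :=
  G.isHermitian_adjMatR_s17.dotProduct_mulVec_le (fun _ ht => G.specRad_eq_sSup_spectrum ▸
    le_csSup G.adjMatR.finite_real_spectrum.bddAbove ht) x

theorem adjMatR_sup_of_disjoint {G H : SimpleGraph V} (h : Disjoint G H) :
    (G ⊔ H).adjMatR = G.adjMatR + H.adjMatR := by
  ext i j
  have := disjoint_left.1 h i j
  by_cases hG : G.Adj i j <;> by_cases hH : H.Adj i j <;> simp_all [adjMatR]

theorem adjMatR_sdiff_of_le {G H : SimpleGraph V} (h : H ≤ G) :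
    (G \ H).adjMatR = G.adjMatR - H.adjMatR := by
  ext i j
  by_cases hG : G.Adj i j <;> by_cases hH : H.Adj i j <;> simp_all [adjMatR, @h i j]

theorem dotProduct_adjMatR_starOn {c : V} {W : Set V} (hc : c ∉ W) (x : V → ℝ) :
    x ⬝ᵥ (starOn c W).adjMatR *ᵥ x = 2 * x c * ∑ w ∈ W.toFinset, x w := by
  have hentry : ∀ i j, (if (starOn c W).Adj i j then x i * x j else 0) =
      (if i = c ∧ j ∈ W then x i * x j else 0) + (if j = c ∧ i ∈ W then x i * x j else 0) := by
    intro i j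
    by_cases hi : i = c <;> by_cases hj : j = c <;> by_cases hiW : i ∈ W <;>
      by_cases hjW : j ∈ W <;> grind [starOn_adj]
  simp only [adjMatR_eq_adjMatrix, dotProduct_mulVec_adjMatrix, hentry, Finset.sum_add_distrib,
    ite_and, Finset.sum_ite_eq', Finset.sum_ite_irrel, Finset.mem_univ, if_true,
    Finset.sum_const_zero, ← Finset.sum_filter, ← Finset.mul_sum, ← Finset.sum_mul,
    Set.filter_mem_univ_eq_toFinset]
  ring

theorem dotProduct_adjMatR_move_starOn {G : SimpleGraph V} {u v : V} {W : Set V} (hu : u ∉ W)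
    (hv : v ∉ W) (hvW : ∀ w ∈ W, G.Adj v w) (huW : ∀ w ∈ W, ¬ G.Adj u w) (x : V → ℝ) :
    x ⬝ᵥ ((G \ starOn v W) ⊔ starOn u W).adjMatR *ᵥ x =
      x ⬝ᵥ G.adjMatR *ᵥ x + 2 * (x u - x v) * ∑ w ∈ W.toFinset, x w := by
  have hle : starOn v W ≤ G := fun i j hij => by
    rcases starOn_adj.1 hij with ⟨⟨rfl, hj⟩ | ⟨rfl, hi⟩, -⟩
    exacts [hvW j hj, (hvW i hi).symm]
  have hdisj : Disjoint (G \ starOn v W) (starOn u W) := disjoint_left.2 fun i j hij hu' => by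
    rcases starOn_adj.1 hu' with ⟨⟨rfl, hj⟩ | ⟨rfl, hi⟩, -⟩
    exacts [huW j hj hij.1, huW i hi hij.1.symm]
  rw [adjMatR_sup_of_disjoint hdisj, adjMatR_sdiff_of_le hle, add_mulVec, sub_mulVec,
    dotProduct_add, dotProduct_sub, dotProduct_adjMatR_starOn hu, dotProduct_adjMatR_starOn hv]
  ring

end AdjMatR

end SimpleGraph

theorem specRad_le_move_pendant_block_general {V : Type*} [Fintype V]
    (G : SimpleGraph V) (hG : G.IsCliqueTree)
    (T : Set V) (hT : G.IsBlock T)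
    (u v : V) (hu : u ∈ T) (hv : v ∈ T) (huv : u ≠ v)
    (hcu : G.IsCutVertex u)
    (L : Set V) (hL : G.IsBlock L)
    (hvL : v ∈ L)
    (hpend : ∀ w ∈ L, G.IsCutVertex w → w = v)
    (x : V → ℝ) (hx : ∀ w, 0 < x w)
    (heig : G.adjMatR.mulVec x = G.specRad • x)
    (hxuv : x v ≤ x u)
    (Gstar : SimpleGraph V)
    (hGstar : Gstar =
      (G.deleteEdges {e | ∃ w ∈ L \ {v}, e = s(v, w)}) ⊔
        SimpleGraph.fromEdgeSet {e | ∃ w ∈ L \ {v}, e = s(u, w)}) :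
    G.specRad ≤ Gstar.specRad := by
  have huL : u ∉ L := fun h => huv (hpend u h hcu)
  have hLc : G.IsClique L := hG.2 L hL
  have hadj : G.Adj u v := hG.2 T hT hu hv huv
  have hvW : ∀ w ∈ L \ {v}, G.Adj v w := fun w hw => hLc hvL hw.1 (Ne.symm hw.2)
  have huW : ∀ w ∈ L \ {v}, ¬ G.Adj u w := fun w hw huw =>
    hw.2 (hL.eq_of_adj_of_adj hLc huL hvL hw.1 hadj huw).symm
  have hGstar' : Gstar =
      (G \ SimpleGraph.starOn v (L \ {v})) ⊔ SimpleGraph.starOn u (L \ {v}) := hGstar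
  have hquad : x ⬝ᵥ G.adjMatR *ᵥ x ≤ x ⬝ᵥ Gstar.adjMatR *ᵥ x := by
    rw [hGstar', SimpleGraph.dotProduct_adjMatR_move_starOn (fun h => huL h.1) (fun h => h.2 rfl)
      hvW huW]
    exact le_add_of_nonneg_right <| mul_nonneg (mul_nonneg zero_le_two (sub_nonneg.2 hxuv)) <|
      Finset.sum_nonneg fun w _ => (hx w).le
  have hxx : 0 < x ⬝ᵥ x := Finset.sum_pos (fun w _ => mul_pos (hx w) (hx w)) ⟨u, Finset.mem_univ u⟩
  refine le_of_mul_le_mul_right ?_ hxx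
  calc G.specRad * (x ⬝ᵥ x) = x ⬝ᵥ G.adjMatR *ᵥ x := by rw [heig, dotProduct_smul, smul_eq_mul]
    _ ≤ x ⬝ᵥ Gstar.adjMatR *ᵥ x := hquad
    _ ≤ Gstar.specRad * (x ⬝ᵥ x) := Gstar.dotProduct_adjMatR_mulVec_le_specRad x

/-- Let `G` be a clique tree containing a triangle block `T`
with two cut vertices `u, v`, where a block `L ≅ K_l` (`l ≥ 3`) is attached at
`v` as a pendant block with cut vertex `v`.  Let `x` be a Perron vector of `G`
with `x_u ≥ x_v`, and let `G*` be obtained from `G` by moving the block `K_l`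
from `v` to `u` (deleting all edges from `v` to the other vertices of `L` and
joining those vertices instead to `u`).  Then `ρ(G*) ≥ ρ(G)`. -/
theorem specRad_le_move_pendant_block {V : Type*} [Fintype V]
    (G : SimpleGraph V) (hG : G.IsCliqueTree)
    (T : Set V) (hT : G.IsBlock T) (hT3 : T.ncard = 3)
    (u v : V) (hu : u ∈ T) (hv : v ∈ T) (huv : u ≠ v)
    (hcu : G.IsCutVertex u) (hcv : G.IsCutVertex v)
    (l : ℕ) (hl : 3 ≤ l)
    (L : Set V) (hL : G.IsBlock L) (hLcard : L.ncard = l)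
    (hvL : v ∈ L) (hTL : T ≠ L)
    (hpend : ∀ w ∈ L, G.IsCutVertex w → w = v)
    (x : V → ℝ) (hx : ∀ w, 0 < x w)
    (heig : G.adjMatR.mulVec x = G.specRad • x)
    (hxuv : x v ≤ x u)
    (Gstar : SimpleGraph V)
    (hGstar : Gstar =
      (G.deleteEdges {e | ∃ w ∈ L \ {v}, e = s(v, w)}) ⊔
        SimpleGraph.fromEdgeSet {e | ∃ w ∈ L \ {v}, e = s(u, w)}) :
    G.specRad ≤ Gstar.specRad :=
  specRad_le_move_pendant_block_general G hG T hT u v hu hv huv hcu L hL hvL hpend x hx heig hxuv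
    Gstar hGstar
end
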